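/- arXiv:1807.04163 — 15 statements merged into one kernel-verified Lean document; each statement's English description precedes it below -/
import Mathlib

section
/- Perturbation Lemma (variant of Alkan–Demange–Gale, Lemma 2.2): Let (π, p) be an envy-free solution of a rent-division instance in which every utility function v a r is strictly decreasing, and suppose there exist η > 0 and slopes λ : Fin n → Fin n → ℝ with λ a r > 0 for all a, r, such that v a r x = v a r (p r) + λ a r · (p r − x) for all agents a, rooms r, and all x with p r − η ≤ x ≤ p r (local piecewise linearity below p). Let σ be any permutation of Fin n such that (σ, p) is envy-free and ∏_a λ a (σ a) ≥ ∏_a λ a (τ a) for every permutation τ for which (τ, p) is envy-free (i.e., σ is a maximum-weight perfect matching in the weighted first-choice graph at p with edge weights log λ a r). Then there exists δ₀ > 0 such that for every δ with 0 < δ ≤ δ₀ there is a price vector q : Fin n → ℝ satisfying p r − δ ≤ q r < p r for all rooms r, and (σ, q) is envy-free. -/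
/-!
Lowering every price `p r` by `δ * y r` keeps `σ` envy-free, for small `δ > 0`, as soon as
`lam a r * y r ≤ lam a (σ a) * y (σ a)` whenever agent `a` is indifferent at `p` between `r` and
`σ a`: the other pairs have positive slack. For `y r` take the largest weight of a path ending in
`r` in the graph on rooms with an arc `r → σ a` of multiplicative weight `lam a r / lam a (σ a)`
for each such pair. Simple paths suffice, and `y` satisfies the inequalities, because no cycle has
weight `> 1`: rotating the agents along a cycle gives an envy-free assignment, whose product of
slopes is at most that of `σ`.
-/

open Finset List Equiv

namespace RentDivision

variable {α M : Type*}

def walkWeight [Monoid M] (w : α → α → M) (l : List α) : M :=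
  (zipWith w l l.tail).prod

section Monoid

variable [Monoid M] {w : α → α → M}

@[simp] lemma walkWeight_singleton (a : α) : walkWeight w [a] = 1 := rfl

@[simp] lemma walkWeight_cons_cons (a b : α) (l : List α) :
    walkWeight w (a :: b :: l) = w a b * walkWeight w (b :: l) := rfl

lemma walkWeight_append_cons (A : List α) (x : α) (B : List α) :
    walkWeight w (A ++ x :: B) = walkWeight w (A ++ [x]) * walkWeight w (x :: B) := by
  induction A with
  | nil => simp
  | cons a A ih => cases A <;> simp_all [mul_assoc]

lemma walkWeight_cons_append_singleton (a b : α) (l : List α) :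
    walkWeight w (a :: l ++ [b]) = (zipWith w (a :: l) (l ++ [b])).prod := by
  rw [walkWeight, cons_append, tail_cons, ← cons_append]
  simpa using congrArg List.prod
    (zipWith_append (f := w) (l₁ := a :: l) (l₁' := [b]) (l₂ := l ++ [b]) (l₂' := []) (by simp))

end Monoid

lemma rotate_one_cons (x : α) (l : List α) : (x :: l).rotate 1 = l ++ [x] := by
  simp only [rotate_cons_succ, rotate_zero]

lemma map_formPerm_eq_rotate_one [DecidableEq α] {l : List α} (hl : l.Nodup) :
    l.map l.formPerm = l.rotate 1 :=
  ext_getElem (by simp) fun i h _ => by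
    simp [formPerm_apply_getElem _ hl, getElem_rotate]

section Cycle

variable [DecidableEq α] {x : α} {B : List α}

lemma isChain_cycle_iff {r : α → α → Prop} (h : (x :: B).Nodup) :
    IsChain r (x :: B ++ [x]) ↔ ∀ s ∈ x :: B, r s ((x :: B).formPerm s) := by
  rw [isChain_cons_append_singleton_iff_forall₂, ← rotate_one_cons,
    ← map_formPerm_eq_rotate_one h, forall₂_map_right_iff, forall₂_same]

lemma walkWeight_cycle [CommMonoid M] (w : α → α → M) (h : (x :: B).Nodup) :
    walkWeight w (x :: B ++ [x]) = ∏ s ∈ (x :: B).toFinset, w s ((x :: B).formPerm s) := by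
  rw [walkWeight_cons_append_singleton, ← rotate_one_cons,
    ← map_formPerm_eq_rotate_one h, zipWith_map_right, zipWith_self, prod_toFinset _ h]

lemma walkWeight_cycle_le_one_of_perm [Fintype α] [CommMonoid M] [LE M] {r : α → α → Prop}
    {w : α → α → M} (hr : ∀ a, r a a) (hw : ∀ a, w a a = 1)
    (hperm : ∀ e : Perm α, (∀ s, r s (e s)) → ∏ s, w s (e s) ≤ 1)
    (hnd : (x :: B).Nodup) (hch : IsChain r (x :: B ++ [x])) :
    walkWeight w (x :: B ++ [x]) ≤ 1 := by
  rw [walkWeight_cycle w hnd, prod_subset (subset_univ _) fun s _ hs => by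
    rw [formPerm_apply_of_notMem (by simpa using hs), hw]]
  refine hperm _ fun s => ?_
  by_cases hs : s ∈ x :: B
  · exact (isChain_cycle_iff hnd).1 hch s hs
  · rw [formPerm_apply_of_notMem hs]
    exact hr s

end Cycle

section Potential

variable {K : Type*} [Semiring K] [LinearOrder K] [IsOrderedRing K] {r : α → α → Prop}
  {w : α → α → K}

lemma walkWeight_nonneg (hw : ∀ a b, 0 ≤ w a b) : ∀ l : List α, 0 ≤ walkWeight w l
  | [] => zero_le_one
  | [_] => zero_le_one
  | _ :: b :: l => mul_nonneg (hw _ _) (walkWeight_nonneg hw (b :: l))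

theorem exists_potential_of_walkWeight_cycle_le_one [Fintype α] (hw : ∀ a b, 0 ≤ w a b)
    (hcyc : ∀ x B, (x :: B).Nodup → IsChain r (x :: B ++ [x]) →
      walkWeight w (x :: B ++ [x]) ≤ 1) :
    ∃ y : α → K, (∀ a, 1 ≤ y a) ∧ ∀ a b, r a b → y a * w a b ≤ y b := by
  classical
  let paths (b : α) : Finset {l : List α // l.Nodup} :=
    univ.filter fun l => b ∉ l.1 ∧ IsChain r (l.1 ++ [b])
  have hpaths (b : α) : (paths b).Nonempty := ⟨⟨[], nodup_nil⟩, by simp [paths]⟩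
  let y (b : α) : K := (paths b).sup' (hpaths b) fun l => walkWeight w (l.1 ++ [b])
  have le_y {b : α} {l : List α} (hl : l.Nodup) (hbl : b ∉ l) (hch : IsChain r (l ++ [b])) :
      walkWeight w (l ++ [b]) ≤ y b :=
    le_sup' (fun l : {l // Nodup l} => walkWeight w (l.1 ++ [b])) (b := ⟨l, hl⟩)
      (by simp [paths, hbl, hch])
  refine ⟨y, fun b => le_y nodup_nil not_mem_nil (by simp), fun a b hab => ?_⟩
  obtain ⟨⟨l, hl⟩, hal, hya⟩ := exists_mem_eq_sup' (hpaths a) fun l => walkWeight w (l.1 ++ [a])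
  simp only [paths, Finset.mem_filter, mem_univ, true_and] at hal
  have hnd : (l ++ [a]).Nodup := concat_eq_append ▸ hl.concat hal.1
  have hch : IsChain r (l ++ [a] ++ [b]) := by
    rw [append_assoc, singleton_append, isChain_split]
    exact ⟨hal.2, isChain_pair.2 hab⟩
  have hW : walkWeight w (l ++ [a]) * w a b = walkWeight w (l ++ [a] ++ [b]) := by
    rw [append_assoc, singleton_append, walkWeight_append_cons l a [b], walkWeight_cons_cons,
      walkWeight_singleton, mul_one]
  rw [show y a = _ from hya, hW]
  by_cases hb : b ∈ l ++ [a]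
  · -- the extended walk closes a simple cycle through `b`; cutting it out leaves a path to `b`
    obtain ⟨A, C, hAC⟩ := append_of_mem hb
    rw [hAC] at hnd hch ⊢
    rw [append_assoc, cons_append] at hch ⊢
    obtain ⟨hA, hbC, hAbC⟩ := nodup_append.1 hnd
    obtain ⟨hchA, hchC⟩ := isChain_split.1 hch
    calc walkWeight w (A ++ b :: (C ++ [b]))
        = walkWeight w (A ++ [b]) * walkWeight w (b :: C ++ [b]) := walkWeight_append_cons _ _ _
      _ ≤ walkWeight w (A ++ [b]) * 1 :=
        mul_le_mul_of_nonneg_left (hcyc b C hbC hchC) (walkWeight_nonneg hw _)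
      _ ≤ y b := (mul_one _).trans_le <|
        le_y hA (fun h => hAbC b h b mem_cons_self rfl) hchA
  · exact le_y hnd hb hch

end Potential

lemma exists_pos_le_of_finite {ι : Type*} [Finite ι] {P : ι → Prop} {f : ι → ℝ}
    (hf : ∀ i, P i → 0 < f i) : ∃ c > 0, ∀ i, P i → c ≤ f i := by
  rcases isEmpty_or_nonempty {i // P i} with h | h
  · exact ⟨1, one_pos, fun i hi => (h.false ⟨i, hi⟩).elim⟩
  · obtain ⟨i₀, hi₀⟩ := Finite.exists_min fun i : {i // P i} => f i
    exact ⟨f i₀, hf _ i₀.2, fun i hi => hi₀ ⟨i, hi⟩⟩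

section Perturbation

variable {n : ℕ} (v : Fin n → Fin n → ℝ → ℝ) (p : Fin n → ℝ) (lam : Fin n → Fin n → ℝ)
  (σ : Perm (Fin n))

lemma prod_lam_div_le_one_of_indifferent (hlam : ∀ a r, 0 < lam a r)
    (hσEF : ∀ a r, v a r (p r) ≤ v a (σ a) (p (σ a)))
    (hσmax : ∀ τ : Perm (Fin n), (∀ a r, v a r (p r) ≤ v a (τ a) (p (τ a))) →
      (∏ a, lam a (τ a)) ≤ ∏ a, lam a (σ a))
    (e : Perm (Fin n))
    (he : ∀ s, v (σ.symm (e s)) s (p s) = v (σ.symm (e s)) (e s) (p (e s))) :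
    ∏ s, lam (σ.symm (e s)) s / lam (σ.symm (e s)) (e s) ≤ 1 := by
  -- moving each occupant of `e s` to `s` keeps every agent on a first choice
  let τ : Perm (Fin n) := σ.trans e.symm
  have hτ (a : Fin n) : e (τ a) = σ a := e.apply_symm_apply (σ a)
  have hτEF (a r : Fin n) : v a r (p r) ≤ v a (τ a) (p (τ a)) := by
    have := he (τ a)
    rw [hτ, σ.symm_apply_apply] at this
    exact this ▸ hσEF a r
  rw [← Equiv.prod_comp τ]
  simp only [hτ, σ.symm_apply_apply]
  rw [prod_div_distrib, div_le_one (prod_pos fun a _ => hlam a (σ a))]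
  exact hσmax τ hτEF

lemma exists_potential_of_max_prod (hlam : ∀ a r, 0 < lam a r)
    (hσEF : ∀ a r, v a r (p r) ≤ v a (σ a) (p (σ a)))
    (hσmax : ∀ τ : Perm (Fin n), (∀ a r, v a r (p r) ≤ v a (τ a) (p (τ a))) →
      (∏ a, lam a (τ a)) ≤ ∏ a, lam a (σ a)) :
    ∃ y : Fin n → ℝ, (∀ r, 0 < y r ∧ y r ≤ 1) ∧ ∀ a r,
      v a r (p r) = v a (σ a) (p (σ a)) → lam a r * y r ≤ lam a (σ a) * y (σ a) := by
  -- arc `r → s` when the occupant `σ⁻¹ s` of `s` is indifferent between `r` and `s`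
  obtain ⟨y, hy1, hy⟩ := exists_potential_of_walkWeight_cycle_le_one
    (r := fun r s => v (σ.symm s) r (p r) = v (σ.symm s) s (p s))
    (w := fun r s => lam (σ.symm s) r / lam (σ.symm s) s)
    (fun _ _ => (div_pos (hlam _ _) (hlam _ _)).le)
    fun _ _ => walkWeight_cycle_le_one_of_perm (fun _ => rfl) (fun _ => div_self (hlam _ _).ne')
      (prod_lam_div_le_one_of_indifferent v p lam σ hlam hσEF hσmax)
  have hy0 (r : Fin n) : 0 < y r := one_pos.trans_le (hy1 r)
  set Y := ∑ s, y s
  have hyY (r : Fin n) : y r ≤ Y := single_le_sum (fun s _ => (hy0 s).le) (mem_univ r)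
  refine ⟨fun r => y r / Y, fun r => ⟨div_pos (hy0 r) ((hy0 r).trans_le (hyY r)),
    div_le_one_of_le₀ (hyY r) ((hy0 r).le.trans (hyY r))⟩, fun a r har => ?_⟩
  have := hy r (σ a) (by simpa using har)
  simp only [σ.symm_apply_apply, mul_div_assoc'] at this
  rw [div_le_iff₀ (hlam _ _)] at this
  rw [mul_div_assoc', mul_div_assoc']
  exact div_le_div_of_nonneg_right (by linarith) (hy0 a |>.le.trans (hyY a))

lemma envyFree_sub_mul_potential (hlam : ∀ a r, 0 < lam a r)
    (hσEF : ∀ a r, v a r (p r) ≤ v a (σ a) (p (σ a))) {η : ℝ}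
    (hlin : ∀ a r x, p r - η ≤ x → x ≤ p r → v a r x = v a r (p r) + lam a r * (p r - x))
    {y : Fin n → ℝ} (hy : ∀ r, 0 < y r ∧ y r ≤ 1)
    (hyσ : ∀ a r, v a r (p r) = v a (σ a) (p (σ a)) → lam a r * y r ≤ lam a (σ a) * y (σ a))
    {δ : ℝ} (hδ : 0 ≤ δ) (hδη : δ ≤ η)
    (hδslack : ∀ a r, v a r (p r) < v a (σ a) (p (σ a)) →
      δ * lam a r ≤ v a (σ a) (p (σ a)) - v a r (p r)) (a r : Fin n) :
    v a r (p r - δ * y r) ≤ v a (σ a) (p (σ a) - δ * y (σ a)) := by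
  have hδy (s : Fin n) : 0 ≤ δ * y s ∧ δ * y s ≤ δ :=
    ⟨mul_nonneg hδ (hy s).1.le, mul_le_of_le_one_right hδ (hy s).2⟩
  have hv (s : Fin n) : v a s (p s - δ * y s) = v a s (p s) + lam a s * (δ * y s) := by
    rw [hlin a s _ (by linarith [hδy s]) (by linarith [hδy s]), sub_sub_cancel]
  rw [hv, hv]
  have hσ : 0 ≤ lam a (σ a) * (δ * y (σ a)) := mul_nonneg (hlam _ _).le (hδy _).1
  rcases (hσEF a r).lt_or_eq with hlt | heq
  · have := mul_le_mul_of_nonneg_left (hδy r).2 (hlam a r).le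
    linarith [hδslack a r hlt]
  · have := mul_le_mul_of_nonneg_left (hyσ a r heq) hδ
    linarith [mul_left_comm δ (lam a r) (y r), mul_left_comm δ (lam a (σ a)) (y (σ a))]

end Perturbation

end RentDivision

open RentDivision in
theorem perturbation_lemma_general
    (n : ℕ) (v : Fin n → Fin n → ℝ → ℝ)
    (p : Fin n → ℝ)
    (η : ℝ) (hη : 0 < η)
    (lam : Fin n → Fin n → ℝ) (hlam : ∀ a r, 0 < lam a r)
    (hlin : ∀ a r x, p r - η ≤ x → x ≤ p r →
      v a r x = v a r (p r) + lam a r * (p r - x))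
    (σ : Equiv.Perm (Fin n))
    (hσEF : ∀ a r, v a r (p r) ≤ v a (σ a) (p (σ a)))
    (hσmax : ∀ τ : Equiv.Perm (Fin n),
      (∀ a r, v a r (p r) ≤ v a (τ a) (p (τ a))) →
      (∏ a, lam a (τ a)) ≤ ∏ a, lam a (σ a)) :
    ∃ δ₀ > 0, ∀ δ, 0 < δ → δ ≤ δ₀ →
      ∃ q : Fin n → ℝ, (∀ r, p r - δ ≤ q r ∧ q r < p r) ∧
        ∀ a r, v a r (q r) ≤ v a (σ a) (q (σ a)) := by
  obtain ⟨y, hy, hyσ⟩ := exists_potential_of_max_prod v p lam σ hlam hσEF hσmax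
  obtain ⟨c, hc0, hc⟩ := exists_pos_le_of_finite
    (P := fun ar : Fin n × Fin n => v ar.1 ar.2 (p ar.2) < v ar.1 (σ ar.1) (p (σ ar.1)))
    (f := fun ar => (v ar.1 (σ ar.1) (p (σ ar.1)) - v ar.1 ar.2 (p ar.2)) / lam ar.1 ar.2)
    fun ar h => div_pos (sub_pos.2 h) (hlam _ _)
  refine ⟨min η c, lt_min hη hc0, fun δ hδ hδc => ⟨fun r => p r - δ * y r, fun r => ?_, ?_⟩⟩
  · have := mul_le_of_le_one_right hδ.le (hy r).2
    have := mul_pos hδ (hy r).1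
    constructor <;> linarith
  · refine envyFree_sub_mul_potential v p lam σ hlam hσEF hlin hy hyσ hδ.le
      (hδc.trans (min_le_left _ _)) fun a r h => ?_
    exact (le_div_iff₀ (hlam a r)).1 ((hδc.trans (min_le_right _ _)).trans (hc (a, r) h))

/-- Perturbation Lemma (variant of Alkan–Demange–Gale). -/
theorem perturbation_lemma
    (n : ℕ) (v : Fin n → Fin n → ℝ → ℝ)
    (hanti : ∀ a r, StrictAnti (v a r))
    (π : Equiv.Perm (Fin n)) (p : Fin n → ℝ)
    (hEF : ∀ a r, v a r (p r) ≤ v a (π a) (p (π a)))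
    (η : ℝ) (hη : 0 < η)
    (lam : Fin n → Fin n → ℝ) (hlam : ∀ a r, 0 < lam a r)
    (hlin : ∀ a r x, p r - η ≤ x → x ≤ p r →
      v a r x = v a r (p r) + lam a r * (p r - x))
    (σ : Equiv.Perm (Fin n))
    (hσEF : ∀ a r, v a r (p r) ≤ v a (σ a) (p (σ a)))
    (hσmax : ∀ τ : Equiv.Perm (Fin n),
      (∀ a r, v a r (p r) ≤ v a (τ a) (p (τ a))) →
      (∏ a, lam a (τ a)) ≤ ∏ a, lam a (σ a)) :
    ∃ δ₀ > 0, ∀ δ, 0 < δ → δ ≤ δ₀ →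
      ∃ q : Fin n → ℝ, (∀ r, p r - δ ≤ q r ∧ q r < p r) ∧
        ∀ a r, v a r (q r) ≤ v a (σ a) (q (σ a)) :=
  perturbation_lemma_general n v p η hη lam hlam hlin σ hσEF hσmax
end

section
/- Lemma 6.1 (a),(b): Let (π, p) and (σ, q) be two envy-free solutions of a rent-division instance in which every utility function v a r : ℝ → ℝ is strictly decreasing. Then for every agent a: (a) if p (π a) ≥ q (π a) then p (σ a) ≥ q (σ a); and (b) if p (π a) ≤ q (π a) then p (σ a) ≤ q (σ a). -/
/-!
Agent `a` weakly prefers room `σ a` to room `π a` at prices `q` and the reverse at prices `p`;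
chaining these two envy-freeness inequalities through the monotonicity of `v a (π a)` shows that
if room `π a` did not get more expensive from `p` to `q`, neither did room `σ a` (and likewise for
strict drops). For (b) this says that the permutation `σ ∘ π⁻¹` maps the finite set of rooms whose
price strictly dropped into itself, hence onto itself; so `σ a` lies in that set only if `π a`
does.
-/

section EnvyFree

variable {α β γ : Type*} [LinearOrder β] [Preorder γ]

def IsEnvyFree (v : α → α → β → γ) (π : Equiv.Perm α) (p : α → β) : Prop :=
  ∀ a r, v a r (p r) ≤ v a (π a) (p (π a))

variable {v : α → α → β → γ} {π σ : Equiv.Perm α} {p q : α → β}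

theorem IsEnvyFree.le_price_of_le_price (hp : IsEnvyFree v π p) (hq : IsEnvyFree v σ q)
    (hanti : ∀ a r, StrictAnti (v a r)) {a : α} (h : q (π a) ≤ p (π a)) :
    q (σ a) ≤ p (σ a) :=
  (hanti a (σ a)).le_iff_ge.mp <|
    calc v a (σ a) (p (σ a)) ≤ v a (π a) (p (π a)) := hp a (σ a)
      _ ≤ v a (π a) (q (π a)) := (hanti a (π a)).antitone h
      _ ≤ v a (σ a) (q (σ a)) := hq a (π a)

theorem IsEnvyFree.lt_price_of_lt_price (hp : IsEnvyFree v π p) (hq : IsEnvyFree v σ q)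
    (hanti : ∀ a r, StrictAnti (v a r)) {a : α} (h : q (π a) < p (π a)) :
    q (σ a) < p (σ a) :=
  (hanti a (σ a)).lt_iff_gt.mp <|
    calc v a (σ a) (p (σ a)) ≤ v a (π a) (p (π a)) := hp a (σ a)
      _ < v a (π a) (q (π a)) := hanti a (π a) h
      _ ≤ v a (σ a) (q (σ a)) := hq a (π a)

theorem IsEnvyFree.price_le_of_price_le [Finite α] (hp : IsEnvyFree v π p)
    (hq : IsEnvyFree v σ q) (hanti : ∀ a r, StrictAnti (v a r)) {a : α}
    (h : p (π a) ≤ q (π a)) : p (σ a) ≤ q (σ a) := by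
  by_contra! hσa
  have hdrop : ∀ r, q r < p r → q (π.symm.trans σ r) < p (π.symm.trans σ r) := fun r hr =>
    hp.lt_price_of_lt_price hq hanti (a := π.symm r) (by simpa using hr)
  have hπa : q (π a) < p (π a) := by
    simpa using Equiv.Perm.perm_symm_on_of_perm_on_finite hdrop hσa
  exact hπa.not_ge h

end EnvyFree

/-- Lemma 6.1 (a),(b): price comparisons between two envy-free solutions. -/
theorem price_comparison_ab
    (n : ℕ) (v : Fin n → Fin n → ℝ → ℝ)
    (hanti : ∀ a r, StrictAnti (v a r))
    (π σ : Equiv.Perm (Fin n)) (p q : Fin n → ℝ)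
    (hπEF : ∀ a r, v a r (p r) ≤ v a (π a) (p (π a)))
    (hσEF : ∀ a r, v a r (q r) ≤ v a (σ a) (q (σ a)))
    (a : Fin n) :
    (q (π a) ≤ p (π a) → q (σ a) ≤ p (σ a)) ∧
    (p (π a) ≤ q (π a) → p (σ a) ≤ q (σ a)) :=
  ⟨IsEnvyFree.le_price_of_le_price hπEF hσEF hanti,
    IsEnvyFree.price_le_of_price_le hπEF hσEF hanti⟩
end

section
/- Lemma 6.1 (c): Let (π, p) and (σ, q) be two envy-free solutions of a rent-division instance in which every utility function v a r : ℝ → ℝ is strictly decreasing. If for some agent a we have p (π a) ≤ q (π a), and room r' is tight for agent a under (π, p), i.e., π a ≠ r' and v a (π a) (p (π a)) = v a r' (p r'), then p r' ≤ q r'. -/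
/-!
Suppose `q r' < p r'` and let `T` be the set of rooms whose price strictly drops from `p` to `q`.
An agent who can reach, at prices `q`, more than her utility under `(π, p)` must have seen the
price of her `σ`-room drop. Every agent whose `π`-room lies in `T` is such an agent, and so is
`a`, through the tight room `r'`. Hence the permutation `π c ↦ σ c` maps `T` into itself and
sends `π a` into `T`; on a finite set this forces `π a ∈ T`, contradicting
`p (π a) ≤ q (π a)`.
-/

open Function Set

theorem Set.Finite.mem_of_injective_of_mapsTo {ι : Type*} {f : ι → ι} (hf : Injective f)
    {s : Set ι} (hs : s.Finite) (hm : MapsTo f s s) {x : ι} (hx : f x ∈ s) : x ∈ s := by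
  obtain ⟨y, hy, hxy⟩ := ((hs.injOn_iff_bijOn_of_mapsTo hm).mp hf.injOn).surjOn hx
  exact hf hxy ▸ hy

theorem price_drop_of_utility_gain {α β : Type*} {v : α → β → ℝ → ℝ}
    (hanti : ∀ a r, StrictAnti (v a r)) {π σ : α → β} {p q : β → ℝ}
    (hπEF : ∀ a r, v a r (p r) ≤ v a (π a) (p (π a)))
    (hσEF : ∀ a r, v a r (q r) ≤ v a (σ a) (q (σ a)))
    {c : α} {r : β} (hgain : v c (π c) (p (π c)) < v c r (q r)) :
    q (σ c) < p (σ c) :=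
  (hanti c (σ c)).lt_iff_gt.mp <|
    calc v c (σ c) (p (σ c)) ≤ v c (π c) (p (π c)) := hπEF c (σ c)
      _ < v c r (q r) := hgain
      _ ≤ v c (σ c) (q (σ c)) := hσEF c r

theorem price_comparison_tight_general
    (n : ℕ) (v : Fin n → Fin n → ℝ → ℝ)
    (hanti : ∀ a r, StrictAnti (v a r))
    (π σ : Equiv.Perm (Fin n)) (p q : Fin n → ℝ)
    (hπEF : ∀ a r, v a r (p r) ≤ v a (π a) (p (π a)))
    (hσEF : ∀ a r, v a r (q r) ≤ v a (σ a) (q (σ a)))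
    (a : Fin n) (r' : Fin n)
    (hle : p (π a) ≤ q (π a))
    (htight : v a (π a) (p (π a)) = v a r' (p r')) :
    p r' ≤ q r' := by
  by_contra! hdrop
  let T : Set (Fin n) := {r | q r < p r}
  have hmaps : MapsTo (π.symm.trans σ) T T := fun r hr => by
    obtain ⟨c, rfl⟩ := π.surjective r
    simpa [T] using price_drop_of_utility_gain hanti hπEF hσEF (hanti c (π c) hr)
  have hσa : (π.symm.trans σ) (π a) ∈ T := by
    simpa [T] using
      price_drop_of_utility_gain hanti hπEF hσEF (htight.trans_lt (hanti a r' hdrop))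
  exact (T.toFinite.mem_of_injective_of_mapsTo (Equiv.injective _) hmaps hσa).not_ge hle

/-- Lemma 6.1 (c): price comparison for tight edges. -/
theorem price_comparison_tight
    (n : ℕ) (v : Fin n → Fin n → ℝ → ℝ)
    (hanti : ∀ a r, StrictAnti (v a r))
    (π σ : Equiv.Perm (Fin n)) (p q : Fin n → ℝ)
    (hπEF : ∀ a r, v a r (p r) ≤ v a (π a) (p (π a)))
    (hσEF : ∀ a r, v a r (q r) ≤ v a (σ a) (q (σ a)))
    (a : Fin n) (r' : Fin n)
    (hle : p (π a) ≤ q (π a))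
    (hne : π a ≠ r')
    (htight : v a (π a) (p (π a)) = v a r' (p r')) :
    p r' ≤ q r' :=
  price_comparison_tight_general n v hanti π σ p q hπEF hσEF a r' hle htight
end

section
/- Componentwise-minimum lemma (proved inside Lemma 4.3): Let v : Fin n → Fin n → ℝ → ℝ be utilities such that each function v a r : ℝ → ℝ is antitone (monotone nonincreasing), and let π be a permutation of Fin n. If both (π, p) and (π, p') are envy-free solutions, then (π, q) is also an envy-free solution, where q r := min (p r) (p' r) for every room r. -/
theorem Antitone.apply_min_le_apply_min {α β : Type*} [LinearOrder α] [LinearOrder β]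
    {f g : α → β} (hg : Antitone g) {x x' y y' : α}
    (h : f x ≤ g y) (h' : f x' ≤ g y') : f (min x x') ≤ g (min y y') := by
  rw [hg.map_min]
  rcases min_choice x x' with hx | hx <;> rw [hx]
  exacts [le_max_of_le_left h, le_max_of_le_right h']

/-- Componentwise-minimum lemma (proved inside Lemma 4.3): the componentwise
minimum of two envy-free price vectors for the same allocation is envy free. -/
theorem min_prices_envy_free
    (n : ℕ) (v : Fin n → Fin n → ℝ → ℝ)
    (hanti : ∀ a r, Antitone (v a r))
    (π : Equiv.Perm (Fin n)) (p p' : Fin n → ℝ)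
    (hEF : ∀ a r, v a r (p r) ≤ v a (π a) (p (π a)))
    (hEF' : ∀ a r, v a r (p' r) ≤ v a (π a) (p' (π a))) :
    ∀ a r, v a r (min (p r) (p' r)) ≤ v a (π a) (min (p (π a)) (p' (π a))) :=
  fun a r => (hanti a (π a)).apply_min_le_apply_min (hEF a r) (hEF' a r)
end

section
/- Lemma 7.4 (Characterization of E_p): Let v satisfy the standing assumptions and let (π, p) be an envy-free solution with p r ≥ 0 for every room r. Say that room t is tight for agent a if π a ≠ t and v a (π a) (p (π a)) = v a t (p t), and define a step relation on rooms by Step s t ↔ room t is tight for agent π⁻¹ s. Then for every room r the following are equivalent: (i) p r ≤ q r for every envy-free solution (σ, q) with q r' ≥ 0 for all rooms r' (that is, r belongs to E_p, the set of rooms whose price is already the minimum possible over nonnegative envy-free prices); (ii) there exists a room z with p z = 0 such that r is reachable from z, i.e., the reflexive-transitive closure of Step relates z to r. -/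
/-- A function `f : ℝ → ℝ` is piecewise linear: there are finitely many
breakpoints `b 0 < … < b t` such that `f` is affine on `(-∞, b 0]`, on each
`[b i, b (i+1)]`, and on `[b t, ∞)`. -/
def PiecewiseLinear (f : ℝ → ℝ) : Prop :=
  ∃ (t : ℕ) (b : Fin (t + 1) → ℝ), StrictMono b ∧
    (∃ m c : ℝ, ∀ x ≤ b 0, f x = m * x + c) ∧
    (∀ i : Fin t, ∃ m c : ℝ,
      ∀ x ∈ Set.Icc (b i.castSucc) (b i.succ), f x = m * x + c) ∧
    (∃ m c : ℝ, ∀ x, b (Fin.last t) ≤ x → f x = m * x + c)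

/-!
If `r` is reachable from a free room `z` by tight steps, every nonnegative envy-free `(σ, q)` has
`p ≤ q` along the path: the set `{s | p s ≤ q s}` is mapped into itself by the permutation
`π σ⁻¹`, hence also by its inverse, and an agent tied between its room `s` and a room `t` would
envy `t` if `p s ≤ q s` but `q t < p t`.

Conversely, the set `D` of rooms from which `r` is reachable is closed under tight predecessors
and has positive prices, and all of them can be lowered at once. Near `p` every utility is affine
from the left with some slope `L a t > 0`, so lowering each `t ∈ D` by `ε * exp (d t)` keeps
envy-freeness as long as `L a t * exp (d t) ≤ L a s * exp (d s)` whenever the holder `a` of `s`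
is tied with `t`. Such a potential `d` exists once the rooms are reassigned so as to maximise
`∑ a, log (L a (σ a))`: then no cycle of ties has negative cost, and shortest paths give `d`.
-/

open Equiv Filter Topology

namespace List

variable {α : Type*}

lemma IsChain.forall_mem_zip_append_singleton {E : α → α → Prop} {x c : α} {l : List α}
    (h : (x :: l).IsChain E) (hc : E ((x :: l).getLast (cons_ne_nil x l)) c) :
    ∀ e ∈ zip (x :: l) (l ++ [c]), E e.1 e.2 := by
  induction l generalizing x with
  | nil => simpa using hc
  | cons y l ih =>
    rw [isChain_cons_cons] at h
    simp only [cons_append, zip_cons_cons, mem_cons]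
    rintro e (rfl | he)
    · exact h.1
    · exact ih h.2 (by simpa using hc) e he

lemma map_formPerm_eq_zip_rotate [DecidableEq α] {l : List α} (hl : l.Nodup) :
    l.map (fun z => (z, l.formPerm z)) = l.zip (l.rotate 1) := by
  refine ext_getElem (by simp) fun i _ _ => ?_
  simp [formPerm_apply_getElem l hl, getElem_rotate]

end List

namespace PiecewiseLinear

lemma exists_affine_left {f : ℝ → ℝ} (hf : PiecewiseLinear f) (y : ℝ) :
    ∃ m c η : ℝ, 0 < η ∧ ∀ x ∈ Set.Icc (y - η) y, f x = m * x + c := by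
  obtain ⟨t, b, -, ⟨m₀, c₀, h₀⟩, hmid, ⟨m₁, c₁, h₁⟩⟩ := hf
  by_cases hy₀ : y ≤ b 0
  · exact ⟨m₀, c₀, 1, one_pos, fun x hx => h₀ x (hx.2.trans hy₀)⟩
  by_cases hy₁ : b (Fin.last t) < y
  · exact ⟨m₁, c₁, y - b (Fin.last t), by linarith, fun x hx => h₁ x (by linarith [hx.1])⟩
  have hex : ∃ j, y ≤ b j := ⟨Fin.last t, not_lt.1 hy₁⟩
  have hj : y ≤ b (Fin.find _ hex) := Fin.find_spec hex
  obtain ⟨i, hi⟩ := Fin.eq_succ_of_ne_zero fun h => hy₀ (h ▸ hj)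
  have hlt : b i.castSucc < y := not_le.1 (Fin.find_min hex (hi ▸ Fin.castSucc_lt_succ))
  obtain ⟨m, c, hm⟩ := hmid i
  exact ⟨m, c, y - b i.castSucc, by linarith,
    fun x hx => hm x ⟨by linarith [hx.1], hx.2.trans (hi ▸ hj)⟩⟩

lemma exists_left_slope {f : ℝ → ℝ} (hf : PiecewiseLinear f) (hanti : StrictAnti f) (y : ℝ) :
    ∃ L > 0, ∀ᶠ δ in 𝓝 0, 0 ≤ δ → f (y - δ) = f y + L * δ := by
  obtain ⟨m, c, η, hη, hf⟩ := hf.exists_affine_left y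
  have hfy := hf y ⟨by linarith, le_rfl⟩
  have hdrop : f y < f (y - η) := hanti (by linarith)
  rw [hf _ ⟨le_rfl, by linarith⟩] at hdrop
  refine ⟨-m, by nlinarith, (eventually_lt_nhds hη).mono fun δ hδ hδ₀ => ?_⟩
  rw [hf _ ⟨by linarith, by linarith⟩, hfy]
  ring

end PiecewiseLinear

namespace RentDivision

section Potential

variable {α : Type*}

def pathCost (w : α → α → ℝ) : List α → ℝ
  | x :: y :: l => w x y + pathCost w (y :: l)
  | _ => 0

@[simp] lemma pathCost_singleton (w : α → α → ℝ) (x : α) : pathCost w [x] = 0 := rfl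

@[simp] lemma pathCost_cons_cons (w : α → α → ℝ) (x y : α) (l : List α) :
    pathCost w (x :: y :: l) = w x y + pathCost w (y :: l) := rfl

lemma pathCost_append_cons (w : α → α → ℝ) (l₁ : List α) (x : α) (l₂ : List α) :
    pathCost w (l₁ ++ x :: l₂) = pathCost w (l₁ ++ [x]) + pathCost w (x :: l₂) := by
  induction l₁ with
  | nil => simp
  | cons a l₁ ih => cases l₁ <;> simp_all [add_assoc]

lemma sum_map_zip_append_singleton (w : α → α → ℝ) (x c : α) (l : List α) :
    ((List.zip (x :: l) (l ++ [c])).map fun e => w e.1 e.2).sum =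
      pathCost w (x :: l) + w ((x :: l).getLast (List.cons_ne_nil x l)) c := by
  induction l generalizing x with
  | nil => simp
  | cons y l ih => simp [ih, add_assoc]

variable [Fintype α] {E : α → α → Prop} {w : α → α → ℝ}

lemma pathCost_add_nonneg_of_cycle (hw : ∀ x, w x x = 0)
    (hcyc : ∀ τ : Perm α, (∀ x, τ x ≠ x → E x (τ x)) → 0 ≤ ∑ x, w x (τ x))
    {x : α} {l : List α} (hnd : (x :: l).Nodup) (hch : (x :: l).IsChain E)
    (hcl : E ((x :: l).getLast (List.cons_ne_nil x l)) x) :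
    0 ≤ pathCost w (x :: l) + w ((x :: l).getLast (List.cons_ne_nil x l)) x := by
  classical
  set τ := (x :: l).formPerm
  have hpairs : (x :: l).map (fun z => (z, τ z)) = List.zip (x :: l) (l ++ [x]) := by
    simpa using List.map_formPerm_eq_zip_rotate hnd
  have hedge : ∀ z, τ z ≠ z → E z (τ z) := fun z hz =>
    hch.forall_mem_zip_append_singleton hcl (z, τ z)
      (hpairs ▸ List.mem_map_of_mem (List.mem_of_formPerm_apply_ne hz))
  have hsupp : ∑ z ∈ (x :: l).toFinset, w z (τ z) = ∑ z, w z (τ z) :=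
    Finset.sum_subset (Finset.subset_univ _) fun z _ hz => by
      rw [List.formPerm_apply_of_notMem (by simpa using hz), hw]
  calc 0 ≤ ∑ z, w z (τ z) := hcyc τ hedge
    _ = ((x :: l).map fun z => w z (τ z)).sum := by rw [← hsupp, List.sum_toFinset _ hnd]
    _ = _ := by rw [← sum_map_zip_append_singleton, ← hpairs, List.map_map]; rfl

/-- If the path from `t` passes through `s`, cut out the cycle that the edge `s → t` closes. -/
lemma exists_path_cons_le (hw : ∀ x, w x x = 0)
    (hcyc : ∀ τ : Perm α, (∀ x, τ x ≠ x → E x (τ x)) → 0 ≤ ∑ x, w x (τ x))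
    {s t : α} (hst : E s t) {l : List α} (hnd : (t :: l).Nodup) (hch : (t :: l).IsChain E) :
    ∃ l', ((s :: l').Nodup ∧ (s :: l').IsChain E) ∧
      pathCost w (s :: l') ≤ w s t + pathCost w (t :: l) := by
  by_cases hs : s ∈ t :: l
  · rcases List.mem_cons.1 hs with rfl | hs
    · exact ⟨l, ⟨hnd, hch⟩, by simp [hw]⟩
    obtain ⟨l₁, l₂, rfl⟩ := List.append_of_mem hs
    have hsuf : s :: l₂ <:+ t :: (l₁ ++ s :: l₂) := ⟨t :: l₁, by simp⟩
    have hpre : t :: (l₁ ++ [s]) <+: t :: (l₁ ++ s :: l₂) := ⟨l₂, by simp⟩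
    have hlast : (t :: (l₁ ++ [s])).getLast (List.cons_ne_nil _ _) = s := by simp
    have hcycle := pathCost_add_nonneg_of_cycle hw hcyc (hnd.sublist hpre.sublist)
      (hch.prefix hpre) (by rwa [hlast])
    have hcost := pathCost_append_cons w (t :: l₁) s l₂
    rw [hlast] at hcycle
    simp only [List.cons_append] at hcost
    exact ⟨l₂, ⟨hnd.sublist hsuf.sublist, hch.suffix hsuf⟩, by linarith⟩
  · exact ⟨t :: l, ⟨List.nodup_cons.2 ⟨hs, hnd⟩, List.isChain_cons_cons.2 ⟨hst, hch⟩⟩, le_rfl⟩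

theorem exists_potential_of_sum_perm_nonneg (hw : ∀ x, w x x = 0)
    (hcyc : ∀ τ : Perm α, (∀ x, τ x ≠ x → E x (τ x)) → 0 ≤ ∑ x, w x (τ x)) :
    ∃ d : α → ℝ, ∀ s t, E s t → d t ≤ d s + w s t := by
  let paths (s : α) : Set (List α) := {l | (s :: l).Nodup ∧ (s :: l).IsChain E}
  have hfin (s : α) : (paths s).Finite :=
    ((Set.finite_coe_iff.mp (inferInstanceAs (Finite {l : List α // l.Nodup}))).preimage
      List.cons_injective.injOn).subset fun _ hl => hl.1
  have hmin (s : α) : ∃ l ∈ paths s, ∀ l' ∈ paths s, pathCost w (s :: l) ≤ pathCost w (s :: l') :=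
    (paths s).exists_min_image _ (hfin s) ⟨[], List.nodup_singleton s, List.isChain_singleton s⟩
  choose P hP hPmin using hmin
  refine ⟨fun s => -pathCost w (s :: P s), fun s t hst => ?_⟩
  obtain ⟨l', hl', hcost⟩ := exists_path_cons_le hw hcyc hst (hP t).1 (hP t).2
  linarith [hPmin s l' hl']

end Potential

section EnvyFree

variable {ι : Type*} (v : ι → ι → ℝ → ℝ)

def IsEnvyFree (σ : Perm ι) (q : ι → ℝ) : Prop :=
  ∀ a r, v a r (q r) ≤ v a (σ a) (q (σ a))

def TightStep (π : Perm ι) (p : ι → ℝ) (s t : ι) : Prop :=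
  s ≠ t ∧ v (π.symm s) s (p s) = v (π.symm s) t (p t)

variable {v}

theorem IsEnvyFree.le_of_reflTransGen [Finite ι] (hanti : ∀ a r, StrictAnti (v a r))
    {π σ : Perm ι} {p q : ι → ℝ} (hπ : IsEnvyFree v π p) (hσ : IsEnvyFree v σ q) {z r : ι}
    (hz : p z ≤ q z) (hzr : Relation.ReflTransGen (TightStep v π p) z r) : p r ≤ q r := by
  let A : Set ι := {s | p s ≤ q s}
  have favorite : ∀ a t, v a (π a) (p (π a)) ≤ v a t (p t) → σ a ∈ A → t ∈ A :=
    fun a t hfav hσa => (hanti a t).le_iff_ge.1 <|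
      calc v a t (q t) ≤ v a (σ a) (q (σ a)) := hσ a t
        _ ≤ v a (σ a) (p (σ a)) := (hanti a (σ a)).antitone hσa
        _ ≤ v a (π a) (p (π a)) := hπ a (σ a)
        _ ≤ v a t (p t) := hfav
  have hmaps : Set.MapsTo (π * σ⁻¹) A A := fun s hs =>
    favorite (σ.symm s) _ le_rfl (by simpa using hs)
  -- `π * σ⁻¹` permutes the finite set `A`, so its inverse maps `A` into itself as well.
  have hback : ∀ s ∈ A, σ (π.symm s) ∈ A := fun s hs => by
    obtain ⟨x, hx, hxs⟩ := (((Set.toFinite A).injOn_iff_bijOn_of_mapsTo hmaps).1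
      (π * σ⁻¹).injective.injOn).surjOn hs
    rw [← hxs]
    simpa using hx
  induction hzr with
  | refl => exact hz
  | tail _ hst ih =>
    refine favorite _ _ (le_of_eq ?_) (hback _ ih)
    simpa using hst.2

theorem IsEnvyFree.eventually_sub_smul [Finite ι] {σ : Perm ι} {p : ι → ℝ}
    (hσ : IsEnvyFree v σ p) {u : ι → ℝ} (hu : 0 ≤ u) {L : ι → ι → ℝ}
    (hL : ∀ a t, ∀ᶠ δ in 𝓝 0, 0 ≤ δ → v a t (p t - δ) = v a t (p t) + L a t * δ)
    (htight : ∀ a t, v a t (p t) = v a (σ a) (p (σ a)) → L a t * u t ≤ L a (σ a) * u (σ a)) :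
    ∀ᶠ ε : ℝ in 𝓝[≥] 0, IsEnvyFree v σ (p - ε • u) := by
  have hlin : ∀ a t, ∀ᶠ ε in 𝓝[≥] 0,
      v a t ((p - ε • u) t) = v a t (p t) + ε * (L a t * u t) := fun a t => by
    have hδ : Tendsto (fun ε => ε * u t) (𝓝[≥] 0) (𝓝 0) :=
      ((continuous_mul_const (u t)).tendsto' 0 0 (zero_mul _)).mono_left nhdsWithin_le_nhds
    filter_upwards [hδ.eventually (hL a t), self_mem_nhdsWithin] with ε hε hε₀
    rw [Pi.sub_apply, Pi.smul_apply, smul_eq_mul, hε (mul_nonneg hε₀ (hu t))]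
    ring
  have hpair : ∀ a t, ∀ᶠ ε in 𝓝[≥] 0,
      v a t (p t) + ε * (L a t * u t) ≤ v a (σ a) (p (σ a)) + ε * (L a (σ a) * u (σ a)) := by
    intro a t
    rcases (hσ a t).lt_or_eq with hlt | heq
    · exact (ContinuousAt.eventually_lt (by fun_prop) (by fun_prop) (by simpa using hlt)).mono
        (fun ε h => h.le) |>.filter_mono nhdsWithin_le_nhds
    · filter_upwards [self_mem_nhdsWithin] with ε hε
      rw [heq]
      exact (add_le_add_iff_left _).2 (mul_le_mul_of_nonneg_left (htight a t heq) hε)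
  simp only [IsEnvyFree, eventually_all]
  intro a t
  filter_upwards [hlin a t, hlin a (σ a), hpair a t] with ε h₁ h₂ h₃
  rw [h₁, h₂]
  exact h₃

lemma eventually_nonneg_sub_smul [Finite ι] {p u : ι → ℝ} (hp : 0 ≤ p)
    (hpu : ∀ t, u t = 0 ∨ 0 < p t) : ∀ᶠ ε : ℝ in 𝓝[≥] 0, 0 ≤ p - ε • u := by
  simp only [Pi.le_def, eventually_all]
  intro t
  rcases hpu t with hu | hpos
  · exact Eventually.of_forall fun ε => by simpa [hu] using hp t
  · refine (ContinuousAt.eventually_lt (f := fun ε => ε * u t) (by fun_prop) continuousAt_const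
      (by simpa using hpos)).filter_mono nhdsWithin_le_nhds |>.mono fun ε hε => ?_
    simpa using hε.le

variable (v) in
def envyFreeAssignments (π : Perm ι) (p : ι → ℝ) (D : Set ι) : Set (Perm ι) :=
  {σ | IsEnvyFree v σ p ∧ ∀ a, σ a ∉ D → σ a = π a}

lemma mul_mem_envyFreeAssignments {π σ τ : Perm ι} {p : ι → ℝ} {D : Set ι}
    (hσ : σ ∈ envyFreeAssignments v π p D)
    (hτ : ∀ s, τ s ≠ s → s ∈ D ∧ τ s ∈ D ∧ TightStep v σ p s (τ s)) :
    τ * σ ∈ envyFreeAssignments v π p D := by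
  refine ⟨fun a r => ?_, fun a ha => ?_⟩ <;> by_cases h : τ (σ a) = σ a
  · simpa [h] using hσ.1 a r
  · have heq := (hτ _ h).2.2.2
    simp only [symm_apply_apply] at heq
    simpa [← heq] using hσ.1 a r
  · simp only [Perm.mul_apply, h] at ha ⊢
    exact hσ.2 a ha
  · exact absurd (hτ _ h).2.1 ha

/-- Rotating the rooms of `σ` along a cycle of ties stays in `envyFreeAssignments`, so by
maximality no such cycle has negative cost for the costs `log (L a s) - log (L a t)`. -/
lemma exists_potential_of_isMaxOn [Fintype ι] {π σ : Perm ι} {p : ι → ℝ} {D : Set ι}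
    {L : ι → ι → ℝ}
    (hmax : IsMaxOn (fun τ : Perm ι => ∑ a, Real.log (L a (τ a))) (envyFreeAssignments v π p D) σ)
    (hσ : σ ∈ envyFreeAssignments v π p D) :
    ∃ d : ι → ℝ, ∀ s t, s ∈ D → t ∈ D → TightStep v σ p s t →
      Real.log (L (σ.symm s) t) + d t ≤ Real.log (L (σ.symm s) s) + d s := by
  let G (s t : ι) : ℝ := Real.log (L (σ.symm s) t)
  obtain ⟨d, hd⟩ := exists_potential_of_sum_perm_nonneg
    (E := fun s t => s ∈ D ∧ t ∈ D ∧ TightStep v σ p s t) (w := fun s t => G s s - G s t)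
    (fun _ => sub_self _) fun τ hτ => by
      rw [← Equiv.sum_comp σ]
      simp only [G, symm_apply_apply, Finset.sum_sub_distrib, sub_nonneg]
      exact hmax (mul_mem_envyFreeAssignments hσ hτ)
  exact ⟨d, fun s t hs ht hst => by linarith [hd s t ⟨hs, ht, hst⟩]⟩

lemma mem_of_tightStep_closed {π σ : Perm ι} {p : ι → ℝ} {D : Set ι}
    (hD : ∀ s t, TightStep v π p s t → t ∈ D → s ∈ D) (hσ : σ ∈ envyFreeAssignments v π p D)
    {a t : ι} (ht : t ∈ D) (heq : v a t (p t) = v a (σ a) (p (σ a))) : σ a ∈ D := by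
  by_contra hσa
  have hπa := hσ.2 a hσa
  refine hσa (hπa ▸ hD (π a) t ⟨fun h => hσa (hπa ▸ h ▸ ht), ?_⟩ ht)
  simpa [hπa] using heq.symm

theorem exists_isEnvyFree_lt_of_tightStep_closed [Fintype ι]
    (hanti : ∀ a r, StrictAnti (v a r)) (hpl : ∀ a r, PiecewiseLinear (v a r))
    {π : Perm ι} {p : ι → ℝ} (hπ : IsEnvyFree v π p) (hp : 0 ≤ p) {D : Set ι}
    (hD : ∀ s t, TightStep v π p s t → t ∈ D → s ∈ D) (hDpos : ∀ t ∈ D, 0 < p t) :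
    ∃ σ q, IsEnvyFree v σ q ∧ 0 ≤ q ∧ ∀ t ∈ D, q t < p t := by
  choose L hLpos hL using fun a t => (hpl a t).exists_left_slope (hanti a t) (p t)
  obtain ⟨σ, hσ, hmax⟩ := (envyFreeAssignments v π p D).exists_max_image
    (fun σ => ∑ a, Real.log (L a (σ a))) (Set.toFinite _) ⟨π, hπ, fun _ _ => rfl⟩
  obtain ⟨d, hd⟩ := exists_potential_of_isMaxOn (isMaxOn_iff.2 hmax) hσ
  let u : ι → ℝ := D.indicator fun t => Real.exp (d t)
  have hu : 0 ≤ u := Set.indicator_nonneg fun _ _ => (Real.exp_pos _).le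
  have htight (a t : ι) (heq : v a t (p t) = v a (σ a) (p (σ a))) :
      L a t * u t ≤ L a (σ a) * u (σ a) := by
    by_cases ht : t ∈ D
    · have hs := mem_of_tightStep_closed hD hσ ht heq
      obtain rfl | hne := eq_or_ne (σ a) t
      · rfl
      have hedge := hd (σ a) t hs ht ⟨hne, by simpa using heq.symm⟩
      simp only [symm_apply_apply] at hedge
      simp only [u, Set.indicator_of_mem ht, Set.indicator_of_mem hs]
      rw [← Real.exp_log (hLpos a t), ← Real.exp_log (hLpos a (σ a)), ← Real.exp_add,
        ← Real.exp_add]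
      exact Real.exp_le_exp.2 hedge
    · simp only [u, Set.indicator_of_notMem ht, mul_zero]
      exact mul_nonneg (hLpos _ _).le (hu _)
  have hpu (t : ι) : u t = 0 ∨ 0 < p t := by
    by_cases ht : t ∈ D
    · exact .inr (hDpos t ht)
    · exact .inl (Set.indicator_of_notMem ht _)
  obtain ⟨ε, ⟨hEF, hq⟩, hε⟩ := (((hσ.1.eventually_sub_smul hu hL htight).and
    (eventually_nonneg_sub_smul hp hpu)).filter_mono
    (nhdsWithin_mono _ Set.Ioi_subset_Ici_self) |>.and self_mem_nhdsWithin).exists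
  refine ⟨σ, p - ε • u, hEF, hq, fun t ht => ?_⟩
  have : 0 < ε * Real.exp (d t) := mul_pos hε (Real.exp_pos _)
  simpa [u, ht] using this

end EnvyFree

end RentDivision

theorem characterization_of_Ep_general
    (n : ℕ) (v : Fin n → Fin n → ℝ → ℝ)
    (hanti : ∀ a r, StrictAnti (v a r))
    (hpl : ∀ a r, PiecewiseLinear (v a r))
    (π : Equiv.Perm (Fin n)) (p : Fin n → ℝ)
    (hEF : ∀ a r, v a r (p r) ≤ v a (π a) (p (π a)))
    (hp : ∀ r, 0 ≤ p r) (r : Fin n) :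
    (∀ (σ : Equiv.Perm (Fin n)) (q : Fin n → ℝ),
        (∀ a r', v a r' (q r') ≤ v a (σ a) (q (σ a))) →
        (∀ r', 0 ≤ q r') → p r ≤ q r)
    ↔ (∃ z : Fin n, p z = 0 ∧
        Relation.ReflTransGen
          (fun s t : Fin n =>
            π (π.symm s) ≠ t ∧
            v (π.symm s) (π (π.symm s)) (p (π (π.symm s))) =
              v (π.symm s) t (p t))
          z r) := by
  simp only [Equiv.apply_symm_apply]
  change _ ↔ ∃ z, p z = 0 ∧ Relation.ReflTransGen (RentDivision.TightStep v π p) z r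
  constructor
  · intro hmin
    by_contra! hno
    obtain ⟨σ, q, hσ, hq, hlt⟩ := RentDivision.exists_isEnvyFree_lt_of_tightStep_closed
      hanti hpl hEF hp (D := {z | Relation.ReflTransGen (RentDivision.TightStep v π p) z r})
      (fun _ _ hst ht => Relation.ReflTransGen.head hst ht)
      (fun t ht => (hp t).lt_of_ne fun h => hno t h.symm ht)
    exact (hmin σ q hσ hq).not_gt (hlt r Relation.ReflTransGen.refl)
  · rintro ⟨z, hz, hzr⟩ σ q hσ hq
    exact RentDivision.IsEnvyFree.le_of_reflTransGen hanti hEF hσ (hz ▸ hq z) hzr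

/-- Lemma 7.4 (Characterization of `E_p`): under the standing assumptions,
for an envy-free solution `(π, p)` with nonnegative prices, the price of room
`r` is minimum possible (over all nonnegative envy-free prices) iff `r` is
reachable, via tight edges, from a room of price zero. -/
theorem characterization_of_Ep
    (n : ℕ) (v : Fin n → Fin n → ℝ → ℝ)
    (hcont : ∀ a r, Continuous (v a r))
    (hanti : ∀ a r, StrictAnti (v a r))
    (hpl : ∀ a r, PiecewiseLinear (v a r))
    (hnonneg : ∀ a r, 0 ≤ v a r 0)
    (π : Equiv.Perm (Fin n)) (p : Fin n → ℝ)
    (hEF : ∀ a r, v a r (p r) ≤ v a (π a) (p (π a)))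
    (hp : ∀ r, 0 ≤ p r) (r : Fin n) :
    (∀ (σ : Equiv.Perm (Fin n)) (q : Fin n → ℝ),
        (∀ a r', v a r' (q r') ≤ v a (σ a) (q (σ a))) →
        (∀ r', 0 ≤ q r') → p r ≤ q r)
    ↔ (∃ z : Fin n, p z = 0 ∧
        Relation.ReflTransGen
          (fun s t : Fin n =>
            π (π.symm s) ≠ t ∧
            v (π.symm s) (π (π.symm s)) (p (π (π.symm s))) =
              v (π.symm s) t (p t))
          z r) :=
  characterization_of_Ep_general n v hanti hpl π p hEF hp r
end

section
/- Theorem 3.1 (existence content of the exact algorithm): Every rent-division instance satisfying the standing assumptions admits an envy-free solution (π, p) such that p r ≥ 0 for all rooms r and p ρ = 0 for at least one room ρ. -/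
open Finset Filter Topology

lemma PiecewiseLinear.tendsto_atBot {f : ℝ → ℝ} (hf : PiecewiseLinear f) (hanti : StrictAnti f) :
    Tendsto f atTop atBot := by
  obtain ⟨t, b, -, -, -, m, c, hlast⟩ := hf
  have hm : m < 0 := by
    have := hanti (lt_add_one (b (Fin.last t)))
    rw [hlast _ le_rfl, hlast _ (by linarith)] at this
    linarith
  exact (tendsto_atBot_add_const_right _ c (tendsto_id.const_mul_atTop_of_neg hm)).congr'
    ((eventually_ge_atTop _).mono fun x hx => (hlast x hx).symm)

namespace RentDivision

open Real

variable {ι κ : Type*} [Fintype κ]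

theorem exists_equiv_forall_mem_of_fractional [Fintype ι] [DecidableEq κ]
    (hcard : Fintype.card ι = Fintype.card κ) (E : ι → Finset κ)
    (M : ι → κ → ℝ) (d : ι → ℝ) (hM : ∀ a r, 0 ≤ M a r) (hd : ∀ a, 0 ≤ d a)
    (hME : ∀ a r, r ∉ E a → M a r = 0)
    (hrow : ∀ a, ∑ r, M a r + d a = 1) (hcol : ∀ r, ∑ a, M a r ≤ 1)
    (hdE : ∀ a r, d a ≠ 0 → ∑ a', M a' r < 1 → r ∈ E a) :
    ∃ f : ι ≃ κ, ∀ a, f a ∈ E a := by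
  have hslack : ∑ a, d a = ∑ r, (1 - ∑ a, M a r) := by
    have := sum_congr rfl fun a (_ : a ∈ univ) => (eq_sub_of_add_eq' (hrow a))
    rw [this, sum_sub_distrib, sum_sub_distrib, sum_comm]
    simp [hcard]
  have hall : ∀ A : Finset ι, #A ≤ #(A.biUnion E) := by
    intro A
    set N := A.biUnion E
    have hrowN : ∀ a ∈ A, ∑ r ∈ N, M a r + d a = 1 := fun a ha => by
      rw [← hrow a, sum_subset (subset_univ N) fun r _ hr =>
        hME a r fun hrE => hr (mem_biUnion.2 ⟨a, ha, hrE⟩)]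
    -- once some agent of `A` uses the outside option, all rooms with slack lie in `N`
    have hdA : ∑ a ∈ A, d a ≤ ∑ r ∈ N, (1 - ∑ a, M a r) := by
      by_cases hA : ∀ a ∈ A, d a = 0
      · rw [sum_eq_zero hA]
        exact sum_nonneg fun r _ => sub_nonneg.2 (hcol r)
      push Not at hA
      obtain ⟨a₀, ha₀, hd₀⟩ := hA
      calc ∑ a ∈ A, d a ≤ ∑ a, d a :=
            sum_le_sum_of_subset_of_nonneg (subset_univ A) fun a _ _ => hd a
        _ = ∑ r ∈ N, (1 - ∑ a, M a r) := by
          rw [hslack, sum_subset (subset_univ N)]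
          intro r _ hr
          have : ¬ ∑ a, M a r < 1 := fun h => hr (mem_biUnion.2 ⟨a₀, ha₀, hdE a₀ r hd₀ h⟩)
          linarith [hcol r]
    have : (#A : ℝ) ≤ #N := calc
      (#A : ℝ) = ∑ a ∈ A, (∑ r ∈ N, M a r + d a) := by simp [sum_congr rfl hrowN]
      _ = ∑ r ∈ N, ∑ a ∈ A, M a r + ∑ a ∈ A, d a := by rw [sum_add_distrib, sum_comm]
      _ ≤ ∑ r ∈ N, (∑ a ∈ A, M a r + (1 - ∑ a, M a r)) := by rw [sum_add_distrib]; linarith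
      _ ≤ ∑ r ∈ N, 1 := sum_le_sum fun r _ => by
          linarith [sum_le_sum_of_subset_of_nonneg (subset_univ A) fun a _ _ => hM a r]
      _ = #N := by simp
    exact_mod_cast this
  obtain ⟨f, hinj, hf⟩ := (all_card_le_biUnion_card_iff_exists_injective E).1 hall
  exact ⟨.ofBijective f ((Fintype.bijective_iff_injective_and_card f).2 ⟨hinj, hcard⟩), hf⟩

section Logit

variable (v : ι → κ → ℝ → ℝ) (β : ℝ)

-- The summand `1 = exp (β * 0)` is the outside option.
noncomputable def logitDenom (p : κ → ℝ) (a : ι) : ℝ :=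
  1 + ∑ r, exp (β * v a r (p r))

noncomputable def logitShare (p : κ → ℝ) (a : ι) (r : κ) : ℝ :=
  exp (β * v a r (p r)) / logitDenom v β p a

noncomputable def logitDemand [Fintype ι] (p : κ → ℝ) (r : κ) : ℝ :=
  ∑ a, logitShare v β p a r

variable {v β} {p q : κ → ℝ} {a : ι} {r : κ}

lemma exp_lt_logitDenom (r : κ) : exp (β * v a r (p r)) < logitDenom v β p a := by
  have := single_le_sum (fun r' _ => (exp_pos (β * v a r' (p r'))).le) (mem_univ r)
  unfold logitDenom
  linarith

lemma one_le_logitDenom : 1 ≤ logitDenom v β p a :=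
  le_add_of_nonneg_right (sum_nonneg fun _ _ => (exp_pos _).le)

lemma logitDenom_pos : 0 < logitDenom v β p a := one_pos.trans_le one_le_logitDenom

lemma logitShare_nonneg : 0 ≤ logitShare v β p a r :=
  div_nonneg (exp_pos _).le logitDenom_pos.le

lemma logitShare_le_one : logitShare v β p a r ≤ 1 :=
  div_le_one_of_le₀ (exp_lt_logitDenom r).le logitDenom_pos.le

lemma sum_logitShare_add_inv_logitDenom :
    ∑ r, logitShare v β p a r + (logitDenom v β p a)⁻¹ = 1 := by
  simp only [logitShare, ← sum_div]
  rw [inv_eq_one_div, ← add_div, div_eq_one_iff_eq logitDenom_pos.ne', logitDenom, add_comm]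

lemma sum_logitDemand_lt [Fintype ι] [Nonempty ι] (hcard : Fintype.card ι ≤ Fintype.card κ) :
    ∑ r, logitDemand v β p r < Fintype.card κ := by
  calc ∑ r, logitDemand v β p r = ∑ a : ι, (1 - (logitDenom v β p a)⁻¹) := by
        simp only [logitDemand]
        rw [sum_comm]
        exact sum_congr rfl fun a _ => eq_sub_of_add_eq sum_logitShare_add_inv_logitDenom
    _ < ∑ a : ι, 1 := sum_lt_sum_of_nonempty univ_nonempty fun a _ =>
        sub_lt_self 1 (inv_pos.2 logitDenom_pos)
    _ ≤ Fintype.card κ := by simpa using hcard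

lemma logitShare_le_exp_mul_sub (r' : κ) :
    logitShare v β p a r ≤ exp (β * (v a r (p r) - v a r' (p r'))) := by
  rw [mul_sub, exp_sub]
  exact div_le_div_of_nonneg_left (exp_pos _).le (exp_pos _) (exp_lt_logitDenom r').le

lemma inv_logitDenom_le_exp_mul_neg (r : κ) :
    (logitDenom v β p a)⁻¹ ≤ exp (β * -v a r (p r)) := by
  rw [mul_neg, exp_neg]
  exact inv_anti₀ (exp_pos _) (exp_lt_logitDenom r).le

lemma logitDenom_le_of_le (hanti : ∀ r, Antitone (v a r)) (hβ : 0 ≤ β) (hpq : p ≤ q) :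
    logitDenom v β q a ≤ logitDenom v β p a := by
  unfold logitDenom
  gcongr with r
  exact hanti r (hpq r)

lemma logitDemand_le_of_le [Fintype ι] (hanti : ∀ a r, Antitone (v a r)) (hβ : 0 ≤ β)
    (hpq : p ≤ q) (hr : p r = q r) : logitDemand v β p r ≤ logitDemand v β q r :=
  sum_le_sum fun a _ => by
    rw [logitShare, logitShare, hr]
    exact div_le_div_of_nonneg_left (exp_pos _).le logitDenom_pos
      (logitDenom_le_of_le (hanti a) hβ hpq)

lemma continuous_logitDemand_update [Fintype ι] [DecidableEq κ]
    (hcont : ∀ a r, Continuous (v a r)) :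
    Continuous fun x => logitDemand v β (Function.update p r x) r := by
  have hp : Continuous fun x => Function.update p r x := continuous_const.update r continuous_id
  unfold logitDemand logitShare logitDenom
  refine continuous_finsetSum _ fun a _ => Continuous.div ?_ ?_ fun x => ?_
  · fun_prop
  · fun_prop
  · exact (logitDenom_pos (v := v) (p := Function.update p r x)).ne'

end Logit

section LogitEquilibrium

open Function

variable [Fintype ι]

structure IsLogitEquilibrium (v : ι → κ → ℝ → ℝ) (β : ℝ) (p : κ → ℝ) : Prop where
  price_nonneg : ∀ r, 0 ≤ p r
  demand_le_one : ∀ r, logitDemand v β p r ≤ 1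
  demand_eq_one : ∀ r, 0 < p r → logitDemand v β p r = 1
  exists_price_eq_zero : ∃ ρ, p ρ = 0

variable [DecidableEq κ] {v : ι → κ → ℝ → ℝ} {β H : ℝ} {p q : κ → ℝ} {r : κ}

variable (v β H) in
noncomputable def clearingPrice (p : κ → ℝ) (r : κ) : ℝ :=
  sInf {x ∈ Set.Icc 0 H | logitDemand v β (update p r x) r ≤ 1}

lemma logitDemand_update_le_one (hH : ∀ a r, v a r H ≤ -1) (hβ0 : 0 ≤ β)
    (hβ : (Fintype.card ι : ℝ) ≤ exp β) : logitDemand v β (update p r H) r ≤ 1 := by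
  have hshare : ∀ a, logitShare v β (update p r H) a r ≤ exp (-β) := fun a => calc
    logitShare v β (update p r H) a r ≤ exp (β * v a r H) := by
      rw [logitShare, update_self]
      exact div_le_self (exp_pos _).le one_le_logitDenom
    _ ≤ exp (-β) := exp_le_exp.2 (by nlinarith [hH a r])
  calc logitDemand v β (update p r H) r ≤ ∑ _a : ι, exp (-β) := sum_le_sum fun a _ => hshare a
    _ = Fintype.card ι / exp β := by simp [exp_neg, div_eq_mul_inv]
    _ ≤ 1 := (div_le_one (exp_pos β)).2 hβ

section

variable (hH0 : 0 ≤ H) (hHS : ∀ p r, logitDemand v β (update p r H) r ≤ 1)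

include hH0 hHS in
lemma clearingPrice_le : clearingPrice v β H p r ≤ H :=
  csInf_le ⟨0, fun _ hx => hx.1.1⟩ ⟨⟨hH0, le_rfl⟩, hHS p r⟩

include hH0 hHS in
lemma clearingPrice_mem (hcont : ∀ a r, Continuous (v a r)) :
    clearingPrice v β H p r ∈ Set.Icc 0 H ∧
      logitDemand v β (update p r (clearingPrice v β H p r)) r ≤ 1 :=
  (isClosed_Icc.inter (isClosed_le (continuous_logitDemand_update hcont)
    continuous_const)).csInf_mem ⟨H, ⟨hH0, le_rfl⟩, hHS p r⟩ ⟨0, fun _ hx => hx.1.1⟩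

include hH0 hHS in
lemma one_lt_logitDemand_update {x : ℝ} (hx0 : 0 ≤ x) (hx : x < clearingPrice v β H p r) :
    1 < logitDemand v β (update p r x) r := by
  by_contra! h
  have : clearingPrice v β H p r ≤ x :=
    csInf_le ⟨0, fun _ hy => hy.1.1⟩ ⟨⟨hx0, hx.le.trans (clearingPrice_le hH0 hHS)⟩, h⟩
  exact this.not_gt hx

include hH0 hHS in
lemma clearingPrice_mono (hanti : ∀ a r, Antitone (v a r)) (hβ0 : 0 ≤ β) (hpq : p ≤ q) :
    clearingPrice v β H p r ≤ clearingPrice v β H q r :=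
  csInf_le_csInf ⟨0, fun _ hx => hx.1.1⟩ ⟨H, ⟨hH0, le_rfl⟩, hHS q r⟩ fun x hx => by
    refine ⟨hx.1, (logitDemand_le_of_le hanti hβ0 ?_ ?_).trans hx.2⟩
    · exact update_le_update_iff.2 ⟨le_rfl, fun j _ => hpq j⟩
    · simp only [update_self]

include hH0 hHS in
lemma logitDemand_eq_one_of_clearingPrice_eq (hcont : ∀ a r, Continuous (v a r))
    (hq : clearingPrice v β H q r = q r) (hpos : 0 < q r) : logitDemand v β q r = 1 := by
  refine le_antisymm ?_ ?_
  · simpa [hq] using (clearingPrice_mem hH0 hHS hcont (p := q) (r := r)).2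
  · have hlim : Tendsto (fun x => logitDemand v β (update q r x) r) (𝓝[<] (q r))
        (𝓝 (logitDemand v β q r)) := by
      simpa using ((continuous_logitDemand_update (β := β) (p := q) (r := r) hcont).tendsto
        (q r)).mono_left nhdsWithin_le_nhds
    refine ge_of_tendsto hlim ?_
    filter_upwards [Ioo_mem_nhdsLT hpos] with x hx
    exact (one_lt_logitDemand_update hH0 hHS hx.1.le (hq ▸ hx.2)).le

end

theorem exists_isLogitEquilibrium [Nonempty ι] (hcard : Fintype.card ι ≤ Fintype.card κ)
    (hcont : ∀ a r, Continuous (v a r)) (hanti : ∀ a r, Antitone (v a r)) (hH0 : 0 ≤ H)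
    (hH : ∀ a r, v a r H ≤ -1) (hβ0 : 0 ≤ β) (hβ : (Fintype.card ι : ℝ) ≤ exp β) :
    ∃ p, IsLogitEquilibrium v β p ∧ ∀ r, p r ≤ H := by
  have hHS : ∀ p r, logitDemand v β (update p r H) r ≤ 1 := fun _ _ =>
    logitDemand_update_le_one hH hβ0 hβ
  have : Fact ((0 : κ → ℝ) ≤ fun _ => H) := ⟨fun _ => hH0⟩
  let G : Set.Icc (0 : κ → ℝ) (fun _ => H) →o Set.Icc (0 : κ → ℝ) (fun _ => H) :=
    { toFun := fun p => ⟨clearingPrice v β H p,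
        fun _ => (clearingPrice_mem hH0 hHS hcont).1.1, fun _ => clearingPrice_le hH0 hHS⟩
      monotone' := fun _ _ hpq _ => clearingPrice_mono hH0 hHS hanti hβ0 hpq }
  obtain ⟨⟨q, hq0, hqH⟩, hfix⟩ : ∃ q, G q = q := ⟨_, G.map_lfp⟩
  have hq : ∀ r, clearingPrice v β H q r = q r := congrFun (congrArg Subtype.val hfix)
  have hdemand : ∀ r, 0 < q r → logitDemand v β q r = 1 := fun r =>
    logitDemand_eq_one_of_clearingPrice_eq hH0 hHS hcont (hq r)
  refine ⟨q, ⟨hq0, fun r => ?_, hdemand, ?_⟩, hqH⟩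
  · simpa [hq r] using (clearingPrice_mem hH0 hHS hcont (p := q) (r := r)).2
  · -- the outside option keeps the total demand below the number of rooms
    by_contra! hpos
    have := sum_logitDemand_lt (v := v) (β := β) (p := q) hcard
    rw [sum_congr rfl fun r _ => hdemand r ((hq0 r).lt_of_ne (hpos r).symm)] at this
    simp at this

end LogitEquilibrium

section FractionalEquilibrium

variable [Fintype ι]

-- `M a r` is the fraction of agent `a` placed in room `r`, `d a` the fraction of `a` taking the
-- outside option of utility `0`.
structure IsFractionalEquilibrium (v : ι → κ → ℝ → ℝ) (p : κ → ℝ) (M : ι → κ → ℝ)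
    (d : ι → ℝ) : Prop where
  price_nonneg : ∀ r, 0 ≤ p r
  exists_price_eq_zero : ∃ ρ, p ρ = 0
  share_nonneg : ∀ a r, 0 ≤ M a r
  outside_nonneg : ∀ a, 0 ≤ d a
  row_sum : ∀ a, ∑ r, M a r + d a = 1
  col_sum_le : ∀ r, ∑ a, M a r ≤ 1
  col_sum_eq : ∀ r, 0 < p r → ∑ a, M a r = 1
  share_eq_zero : ∀ a r r', v a r (p r) < v a r' (p r') → M a r = 0
  outside_eq_zero : ∀ a r, 0 < v a r (p r) → d a = 0

lemma eq_zero_of_tendsto_of_le_exp_mul {X : Type*} {l : Filter X} [l.NeBot] {x y β : X → ℝ}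
    {L c : ℝ} (hx : Tendsto x l (𝓝 L)) (hβ : Tendsto β l atTop) (hy : Tendsto y l (𝓝 c))
    (hc : c < 0) (h0 : ∀ k, 0 ≤ x k) (hle : ∀ k, x k ≤ exp (β k * y k)) : L = 0 :=
  tendsto_nhds_unique hx (squeeze_zero h0 hle (tendsto_exp_atBot.comp (hβ.atTop_mul_neg hc hy)))

variable {v : ι → κ → ℝ → ℝ} {p : κ → ℝ} {M : ι → κ → ℝ} {d : ι → ℝ}

theorem isFractionalEquilibrium_of_tendsto {X : Type*} {l : Filter X} [l.NeBot]
    {β : X → ℝ} {P : X → κ → ℝ} (hcont : ∀ a r, Continuous (v a r))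
    (hβ : Tendsto β l atTop) (hP : ∀ k, IsLogitEquilibrium v (β k) (P k))
    (hPp : Tendsto P l (𝓝 p)) (hM : Tendsto (fun k => logitShare v (β k) (P k)) l (𝓝 M))
    (hd : Tendsto (fun k a => (logitDenom v (β k) (P k) a)⁻¹) l (𝓝 d)) :
    IsFractionalEquilibrium v p M d := by
  have hPr : ∀ r, Tendsto (fun k => P k r) l (𝓝 (p r)) := tendsto_pi_nhds.1 hPp
  have hMar : ∀ a r, Tendsto (fun k => logitShare v (β k) (P k) a r) l (𝓝 (M a r)) :=
    fun a => tendsto_pi_nhds.1 (tendsto_pi_nhds.1 hM a)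
  have hda : ∀ a, Tendsto (fun k => (logitDenom v (β k) (P k) a)⁻¹) l (𝓝 (d a)) :=
    tendsto_pi_nhds.1 hd
  have hv : ∀ a r, Tendsto (fun k => v a r (P k r)) l (𝓝 (v a r (p r))) :=
    fun a r => ((hcont a r).tendsto _).comp (hPr r)
  have hcol : ∀ r, Tendsto (fun k => logitDemand v (β k) (P k) r) l (𝓝 (∑ a, M a r)) :=
    fun r => tendsto_finsetSum _ fun a _ => hMar a r
  have hpos : ∀ r, 0 < p r → ∀ᶠ k in l, 0 < P k r := fun r h => (hPr r).eventually_const_lt h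
  have hp0 : ∀ r, 0 ≤ p r := fun r => ge_of_tendsto' (hPr r) fun k => (hP k).price_nonneg r
  refine
    { price_nonneg := hp0
      exists_price_eq_zero := ?_
      share_nonneg := fun a r => ge_of_tendsto' (hMar a r) fun _ => logitShare_nonneg
      outside_nonneg := fun a => ge_of_tendsto' (hda a) fun _ => (inv_pos.2 logitDenom_pos).le
      row_sum := fun a => tendsto_nhds_unique ((tendsto_finsetSum _ fun r _ => hMar a r).add
        (hda a)) (by simp only [sum_logitShare_add_inv_logitDenom, tendsto_const_nhds])
      col_sum_le := fun r => le_of_tendsto' (hcol r) fun k => (hP k).demand_le_one r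
      col_sum_eq := fun r h => tendsto_nhds_unique (hcol r) (tendsto_const_nhds.congr'
        ((hpos r h).mono fun k hk => ((hP k).demand_eq_one r hk).symm))
      share_eq_zero := fun a r r' h => eq_zero_of_tendsto_of_le_exp_mul (hMar a r) hβ
        ((hv a r).sub (hv a r')) (sub_neg.2 h) (fun _ => logitShare_nonneg)
        (fun _ => logitShare_le_exp_mul_sub r')
      outside_eq_zero := fun a r h => eq_zero_of_tendsto_of_le_exp_mul (hda a) hβ (hv a r).neg
        (neg_neg_of_pos h) (fun _ => (inv_pos.2 logitDenom_pos).le)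
        (fun _ => inv_logitDenom_le_exp_mul_neg r) }
  by_contra! h
  obtain ⟨k, hk⟩ := (eventually_all.2 fun r => hpos r ((hp0 r).lt_of_ne (h r).symm)).exists
  obtain ⟨ρ, hρ⟩ := (hP k).exists_price_eq_zero
  exact (hk ρ).ne' hρ

theorem exists_isFractionalEquilibrium [Nonempty ι] {H : ℝ}
    (hcard : Fintype.card ι ≤ Fintype.card κ) (hcont : ∀ a r, Continuous (v a r))
    (hanti : ∀ a r, Antitone (v a r)) (hH0 : 0 ≤ H) (hH : ∀ a r, v a r H ≤ -1) :
    ∃ p M d, IsFractionalEquilibrium v p M d := by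
  classical
  let β : ℕ → ℝ := fun k => k + Fintype.card ι
  have hβ0 : ∀ k, 0 ≤ β k := fun k => by positivity
  have hβ : ∀ k, (Fintype.card ι : ℝ) ≤ exp (β k) := fun k => by
    linarith [add_one_le_exp (β k), (k.cast_nonneg : (0 : ℝ) ≤ k)]
  choose P hP hPH using fun k =>
    exists_isLogitEquilibrium hcard hcont hanti hH0 hH (hβ0 k) (hβ k)
  have hK : ∀ k, (P k, logitShare v (β k) (P k), fun a => (logitDenom v (β k) (P k) a)⁻¹) ∈
      Set.Icc 0 (fun _ => H) ×ˢ Set.Icc 0 1 ×ˢ Set.Icc 0 1 := fun k =>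
    ⟨⟨(hP k).price_nonneg, hPH k⟩, ⟨fun _ _ => logitShare_nonneg, fun _ _ => logitShare_le_one⟩,
      fun _ => (inv_pos.2 logitDenom_pos).le, fun _ => inv_le_one_of_one_le₀ one_le_logitDenom⟩
  obtain ⟨⟨p, M, d⟩, -, φ, hφ, hlim⟩ :=
    (isCompact_Icc.prod (isCompact_Icc.prod isCompact_Icc)).tendsto_subseq hK
  have hβφ : Tendsto (β ∘ φ) atTop atTop :=
    (tendsto_atTop_add_const_right _ _ tendsto_natCast_atTop_atTop).comp hφ.tendsto_atTop
  exact ⟨p, M, d, isFractionalEquilibrium_of_tendsto hcont hβφ (fun k => hP (φ k))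
    hlim.fst_nhds hlim.snd_nhds.fst_nhds hlim.snd_nhds.snd_nhds⟩

theorem IsFractionalEquilibrium.exists_envyFree (h : IsFractionalEquilibrium v p M d)
    (hcard : Fintype.card ι = Fintype.card κ) (hnonneg : ∀ a r, 0 ≤ v a r 0) :
    ∃ σ : ι ≃ κ, ∀ a r, v a r (p r) ≤ v a (σ a) (p (σ a)) := by
  classical
  let E : ι → Finset κ := fun a => univ.filter fun r => ∀ r', v a r' (p r') ≤ v a r (p r)
  have hME : ∀ a r, r ∉ E a → M a r = 0 := fun a r hr => by
    simp only [E, mem_filter, mem_univ, true_and, not_forall, not_le] at hr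
    obtain ⟨r', hr'⟩ := hr
    exact h.share_eq_zero a r r' hr'
  have hdE : ∀ a r, d a ≠ 0 → ∑ a', M a' r < 1 → r ∈ E a := fun a r hd hr => by
    have hpr : p r = 0 := by
      by_contra hne
      exact hr.ne (h.col_sum_eq r ((h.price_nonneg r).lt_of_ne (Ne.symm hne)))
    refine mem_filter.2 ⟨mem_univ r, fun r' => ?_⟩
    rw [hpr]
    exact (not_lt.1 fun hlt => hd (h.outside_eq_zero a r' hlt)).trans (hnonneg a r)
  obtain ⟨σ, hσ⟩ := exists_equiv_forall_mem_of_fractional hcard E M d h.share_nonneg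
    h.outside_nonneg hME h.row_sum h.col_sum_le hdE
  exact ⟨σ, fun a => (mem_filter.1 (hσ a)).2⟩

end FractionalEquilibrium

end RentDivision

/-- Theorem 3.1 (existence content): under the standing assumptions there is
an envy-free solution with nonnegative prices in which some room has rent
zero. -/
theorem exists_envy_free_with_zero_price
    (n : ℕ) (hn : 0 < n) (v : Fin n → Fin n → ℝ → ℝ)
    (hcont : ∀ a r, Continuous (v a r))
    (hanti : ∀ a r, StrictAnti (v a r))
    (hpl : ∀ a r, PiecewiseLinear (v a r))
    (hnonneg : ∀ a r, 0 ≤ v a r 0) :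
    ∃ (π : Equiv.Perm (Fin n)) (p : Fin n → ℝ),
      (∀ a r, v a r (p r) ≤ v a (π a) (p (π a))) ∧
      (∀ r, 0 ≤ p r) ∧
      ∃ ρ : Fin n, p ρ = 0 := by
  have : Nonempty (Fin n) := ⟨⟨0, hn⟩⟩
  obtain ⟨H, hH0, hH⟩ : ∃ H, 0 ≤ H ∧ ∀ a r, v a r H ≤ -1 :=
    ((eventually_ge_atTop 0).and (eventually_all.2 fun a => eventually_all.2 fun r =>
      ((hpl a r).tendsto_atBot (hanti a r)).eventually_le_atBot (-1))).exists
  obtain ⟨p, M, d, hpMd⟩ := RentDivision.exists_isFractionalEquilibrium le_rfl hcont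
    (fun a r => (hanti a r).antitone) hH0 hH
  obtain ⟨π, hπ⟩ := hpMd.exists_envyFree rfl hnonneg
  exact ⟨π, p, hπ, hpMd.price_nonneg, hpMd.exists_price_eq_zero⟩
end

section
/- Theorem 3.4 (existence content, fixed total rent with nonnegative utilities): Let ε > 0 and C ∈ ℝ, and let the rent-division instance satisfy the standing assumptions. Suppose z : Fin n → Fin n → ℝ satisfies v a r (z a r) = 0 for all agents a and rooms r, and ∑_{r} z a r ≥ C for every agent a. Then there exist a permutation π and a price vector p : Fin n → ℝ such that (π, p) is an ε-envy-free solution, ∑_{r} p r = C, and v a (π a) (p (π a)) ≥ 0 for every agent a. -/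
/-- A solution `(π, p)` is `ε`-envy-free. -/
def EpsEF (n : ℕ) (ε : ℝ) (v : Fin n → Fin n → ℝ → ℝ)
    (π : Equiv.Perm (Fin n)) (p : Fin n → ℝ) : Prop :=
  ∀ a : Fin n,
    (0 ≤ v a (π a) (p (π a)) →
      ∀ r, v a r (p r) ≤ (1 + ε) * v a (π a) (p (π a))) ∧
    (v a (π a) (p (π a)) < 0 →
      ∀ r, (1 + ε) * v a r (p r) ≤ v a (π a) (p (π a)))

/-!
First assume a slack `γ > 0`: every agent's zero-utility prices sum to at least `C + γ`. For a
small additive tolerance `δ`, call `(π, p)` feasible if the total rent is at least `C`, no price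
exceeds the largest zero-utility price of its room, and each agent's envy is at most `δ`, agents
whose every option has nonpositive utility being exempt. The prices `p r = max_a z a r` are
feasible and the feasible set is compact, so the welfare `∑ a, v a (π a) (p (π a))` attains a
maximum on it. There the total rent is `C`: otherwise a small price cut raises the welfare,
because either some room can be made cheaper without creating envy above `δ`, or every room has
a non-occupant who would then envy it, and rotating rooms along a cycle of these agents gains
each of them more than `δ / 2`. At total rent `C` the slack gives every agent a room worth at
least some `ρ > 0`, which turns additive `δ`-envy-freeness with `δ (1 + ε) ≤ ε ρ` into
`ε`-envy-freeness with nonnegative utilities. Without slack, solve for the total rents `C - γ`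
and let `γ → 0`: the `ε`-envy-free solutions with nonnegative utilities and total rent in
`[C - 1, C]` form a compact set.
-/

open Function Set Filter Topology Finset

theorem Function.nonempty_periodicPts {α : Type*} [Finite α] [Nonempty α] (f : α → α) :
    (periodicPts f).Nonempty := by
  obtain ⟨x⟩ := ‹Nonempty α›
  obtain ⟨m, n, heq, hne⟩ : ∃ m n, f^[m] x = f^[n] x ∧ m ≠ n := by
    simpa [Injective] using not_injective_infinite_finite (f^[·] x)
  wlog hlt : m < n generalizing m n
  · exact this n m heq.symm hne.symm (by omega)
  refine ⟨f^[m] x, mk_mem_periodicPts (Nat.sub_pos_of_lt hlt) ?_⟩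
  rw [IsPeriodicPt, IsFixedPt, ← iterate_add_apply, Nat.sub_add_cancel hlt.le, heq]

theorem exists_perm_ne_one_of_forall_ne {α : Type*} [Finite α] [Nonempty α] (f : α → α)
    (hf : ∀ x, f x ≠ x) : ∃ σ : Equiv.Perm α, σ ≠ 1 ∧ ∀ x, σ x = f x ∨ σ x = x := by
  classical
  let σ : Equiv.Perm α := Equiv.Perm.ofSubtype ((bijOn_periodicPts f).equiv f)
  have hσ : ∀ x ∈ periodicPts f, σ x = f x := fun x hx =>
    Equiv.Perm.ofSubtype_apply_of_mem _ hx
  obtain ⟨y, hy⟩ := nonempty_periodicPts f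
  refine ⟨σ, fun h => hf y (by rw [← hσ y hy, h, Equiv.Perm.one_apply]), fun x => ?_⟩
  by_cases hx : x ∈ periodicPts f
  · exact .inl (hσ x hx)
  · exact .inr (Equiv.Perm.ofSubtype_apply_of_not_mem _ hx)

theorem exists_forall_ge_of_isCompact_of_finite {ι X : Type*} [Finite ι] [TopologicalSpace X]
    {S : ι → Set X} (hS : ∀ i, IsCompact (S i)) {f : ι → X → ℝ}
    (hf : ∀ i, ContinuousOn (f i) (S i)) (hne : ∃ i, (S i).Nonempty) :
    ∃ i, ∃ x ∈ S i, ∀ j, ∀ y ∈ S j, f j y ≤ f i x := by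
  classical
  have := Fintype.ofFinite ι
  have : Nonempty X := let ⟨_, x, _⟩ := hne; ⟨x⟩
  choose! m hmS hm using fun i (hi : (S i).Nonempty) => (hS i).exists_isMaxOn hi (hf i)
  obtain ⟨i, hi, hmax⟩ := Finset.exists_max_image {i | (S i).Nonempty} (fun i => f i (m i))
    (by simpa [Finset.Nonempty] using hne)
  simp only [Finset.mem_filter, Finset.mem_univ, true_and] at hi hmax
  exact ⟨i, m i, hmS i hi, fun j y hy => (hm j ⟨y, hy⟩ hy).trans (hmax j ⟨y, hy⟩)⟩

variable {ι : Type*}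

theorem isCompact_setOf_le_sum_and_le [Fintype ι] (s : ℝ) (q : ι → ℝ) :
    IsCompact {p : ι → ℝ | s ≤ ∑ i, p i ∧ p ≤ q} := by
  have hclosed : IsClosed {p : ι → ℝ | s ≤ ∑ i, p i ∧ p ≤ q} :=
    (isClosed_le continuous_const (continuous_finsetSum _ fun i _ => continuous_apply i)).inter
      (isClosed_le continuous_id continuous_const)
  refine (isCompact_Icc (a := fun i => q i - (∑ j, q j - s)) (b := q)).of_isClosed_subset
    hclosed fun p ⟨hs, hpq⟩ => ⟨fun i => ?_, hpq⟩
  have := single_le_sum (f := q - p) (fun j _ => sub_nonneg.2 (hpq j)) (mem_univ i)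
  simp only [Pi.sub_apply, sum_sub_distrib] at this
  linarith

theorem exists_pos_forall_le {κ : Type*} [Finite κ] {c : κ → ℝ} (hc : ∀ k, 0 < c k) :
    ∃ ρ > 0, ∀ k, ρ ≤ c k :=
  ((eventually_all.2 fun k => Ioc_mem_nhdsGT (hc k)).and self_mem_nhdsWithin).exists.imp
    fun _ h => ⟨h.2, fun k => (h.1 k).2⟩

variable {v : ι → ι → ℝ → ℝ}

def welfare [Fintype ι] (v : ι → ι → ℝ → ℝ) (π : Equiv.Perm ι) (p : ι → ℝ) : ℝ :=
  ∑ a, v a (π a) (p (π a))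

def AdditiveEF (v : ι → ι → ℝ → ℝ) (δ : ℝ) (π : Equiv.Perm ι) (p : ι → ℝ) : Prop :=
  ∀ a r, v a r (p r) ≤ max (v a (π a) (p (π a)) + δ) 0

def RatioEF (v : ι → ι → ℝ → ℝ) (ε : ℝ) (π : Equiv.Perm ι) (p : ι → ℝ) : Prop :=
  ∀ a r, v a r (p r) ≤ (1 + ε) * v a (π a) (p (π a))

theorem continuous_welfare [Fintype ι] (hcont : ∀ a r, Continuous (v a r)) (π : Equiv.Perm ι) :
    Continuous (welfare v π) := by
  unfold welfare
  fun_prop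

theorem isClosed_setOf_additiveEF (hcont : ∀ a r, Continuous (v a r)) (δ : ℝ)
    (π : Equiv.Perm ι) : IsClosed {p | AdditiveEF v δ π p} := by
  simp only [AdditiveEF, ofPred_forall]
  exact isClosed_iInter fun a => isClosed_iInter fun r => isClosed_le (by fun_prop) (by fun_prop)

theorem isClosed_setOf_ratioEF (hcont : ∀ a r, Continuous (v a r)) (ε : ℝ)
    (π : Equiv.Perm ι) : IsClosed {p | RatioEF v ε π p} := by
  simp only [RatioEF, ofPred_forall]
  exact isClosed_iInter fun a => isClosed_iInter fun r => isClosed_le (by fun_prop) (by fun_prop)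

theorem AdditiveEF.of_nonpos {δ : ℝ} {π : Equiv.Perm ι} {p : ι → ℝ}
    (h : ∀ a r, v a r (p r) ≤ 0) : AdditiveEF v δ π p :=
  fun a r => (h a r).trans (le_max_right _ _)

theorem AdditiveEF.of_le_utility {δ : ℝ} {π π' : Equiv.Perm ι} {p : ι → ℝ}
    (h : AdditiveEF v δ π p) (hle : ∀ a, v a (π a) (p (π a)) ≤ v a (π' a) (p (π' a))) :
    AdditiveEF v δ π' p :=
  fun a r => (h a r).trans (max_le_max_right 0 (add_le_add_left (hle a) δ))

theorem update_sub_le [DecidableEq ι] (p : ι → ℝ) (r : ι) {α : ℝ} (hα : 0 ≤ α) :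
    update p r (p r - α) ≤ p := by
  intro i
  rcases eq_or_ne i r with rfl | hi
  · simpa using hα
  · simp [hi]

theorem AdditiveEF.update_sub [DecidableEq ι] {δ α : ℝ} {π : Equiv.Perm ι} {p : ι → ℝ} {r : ι}
    (hanti : ∀ a r, Antitone (v a r)) (h : AdditiveEF v δ π p) (hδ : 0 ≤ δ) (hα : 0 ≤ α)
    (hr : ∀ a, π a ≠ r → v a r (p r - α) ≤ max (v a (π a) (p (π a)) + δ) 0) :
    AdditiveEF v δ π (update p r (p r - α)) := by
  set p' := update p r (p r - α)
  have hown : ∀ a, v a (π a) (p (π a)) ≤ v a (π a) (p' (π a)) := fun a =>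
    hanti a (π a) (update_sub_le p r hα (π a))
  have hmax : ∀ a, max (v a (π a) (p (π a)) + δ) 0 ≤ max (v a (π a) (p' (π a)) + δ) 0 :=
    fun a => max_le_max_right 0 (add_le_add_left (hown a) δ)
  intro a r'
  rcases eq_or_ne r' r with rfl | hr'
  · rcases eq_or_ne (π a) r' with ha | ha
    · rw [← ha]
      exact le_max_of_le_left (le_add_of_nonneg_right hδ)
    · simpa [p'] using (hr a ha).trans (hmax a)
  · simpa [p', hr'] using (h a r').trans (hmax a)

theorem AdditiveEF.exists_rotation [Finite ι] [Nonempty ι] {δ α : ℝ} {π : Equiv.Perm ι}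
    {p : ι → ℝ} (h : AdditiveEF v δ π p) (hδ : 0 ≤ δ)
    (hclose : ∀ a r, v a r (p r - α) < v a r (p r) + δ / 2)
    (f : ι → ι) (hf : ∀ r, π (f r) ≠ r)
    (henvy : ∀ r, max (v (f r) (π (f r)) (p (π (f r))) + δ) 0 < v (f r) r (p r - α)) :
    ∃ π' : Equiv.Perm ι, AdditiveEF v δ π' p ∧
      (∀ a, v a (π a) (p (π a)) ≤ v a (π' a) (p (π' a))) ∧
      ∃ a, v a (π a) (p (π a)) < v a (π' a) (p (π' a)) := by
  obtain ⟨σ, hσ1, hσ⟩ := exists_perm_ne_one_of_forall_ne (fun r => π (f r)) hf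
  -- an agent moved by the rotation `σ⁻¹` was envious enough to gain more than `δ / 2`
  have key : ∀ a, σ.symm (π a) = π a ∨
      v a (π a) (p (π a)) < v a (σ.symm (π a)) (p (σ.symm (π a))) := by
    intro a
    rcases hσ (σ.symm (π a)) with hmove | hfix
    · right
      have hfa : f (σ.symm (π a)) = a := π.injective (by simpa using hmove.symm)
      have := henvy (σ.symm (π a))
      rw [hfa] at this
      have := hclose a (σ.symm (π a))
      have := le_max_left (v a (π a) (p (π a)) + δ) 0
      linarith
    · left
      exact hfix.symm.trans (σ.apply_symm_apply _)
  have hle : ∀ a, v a (π a) (p (π a)) ≤ v a (σ.symm (π a)) (p (σ.symm (π a))) := fun a =>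
    (key a).elim (fun ha => by rw [ha]) le_of_lt
  obtain ⟨r, hr⟩ : ∃ r, σ.symm r ≠ r := by
    by_contra! hfix
    exact hσ1 (Equiv.ext fun r => by simpa using (congrArg σ (hfix r)).symm)
  refine ⟨π.trans σ.symm, h.of_le_utility hle, hle, π.symm r, ?_⟩
  simpa [hr] using key (π.symm r)

theorem AdditiveEF.exists_welfare_lt [Fintype ι] [Nonempty ι] {δ s : ℝ} {π : Equiv.Perm ι}
    {p : ι → ℝ} (hcont : ∀ a r, Continuous (v a r)) (hanti : ∀ a r, StrictAnti (v a r))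
    (h : AdditiveEF v δ π p) (hδ : 0 < δ) (hs : 0 < s) :
    ∃ π' p', AdditiveEF v δ π' p' ∧ p' ≤ p ∧ ∑ r, p r - s ≤ ∑ r, p' r ∧
      welfare v π p < welfare v π' p' := by
  classical
  have hclose : ∀ a r, ∀ᶠ α in 𝓝[>] (0 : ℝ), v a r (p r - α) < v a r (p r) + δ / 2 := by
    intro a r
    have : Tendsto (fun α => v a r (p r - α)) (𝓝 0) (𝓝 (v a r (p r))) :=
      (show Continuous fun α => v a r (p r - α) by fun_prop).tendsto' 0 _ (by simp)
    exact (this.mono_left nhdsWithin_le_nhds).eventually_lt_const (by linarith)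
  obtain ⟨α, ⟨hαs, hαclose⟩, hα⟩ := (((eventually_le_nhds hs).filter_mono nhdsWithin_le_nhds).and
    (eventually_all.2 fun a => eventually_all.2 (hclose a)) |>.and self_mem_nhdsWithin).exists
  by_cases hlower : ∃ r, ∀ a, π a ≠ r → v a r (p r - α) ≤ max (v a (π a) (p (π a)) + δ) 0
  · obtain ⟨r, hr⟩ := hlower
    have hle := update_sub_le p r (le_of_lt hα)
    refine ⟨π, update p r (p r - α), h.update_sub (fun a r => (hanti a r).antitone) hδ.le (le_of_lt hα) hr, hle, ?_, ?_⟩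
    · rw [sum_update_of_mem (mem_univ r), sum_sdiff_eq_sub (subset_univ _), sum_singleton]
      linarith
    · refine sum_lt_sum (fun a _ => (hanti a (π a)).antitone (hle (π a))) ⟨π.symm r, mem_univ _, ?_⟩
      simpa using hanti _ r (sub_lt_self (p r) hα)
  · push Not at hlower
    choose f hf henvy using hlower
    obtain ⟨π', h', hle, a, hlt⟩ := h.exists_rotation hδ.le hαclose f hf henvy
    exact ⟨π', p, h', le_rfl, by linarith, sum_lt_sum (fun a _ => hle a) ⟨a, mem_univ _, hlt⟩⟩

theorem AdditiveEF.ratioEF {δ ε ρ : ℝ} {π : Equiv.Perm ι} {p : ι → ℝ} (h : AdditiveEF v δ π p)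
    (hε : 0 ≤ ε) (hρ : 0 < ρ) (hδ : δ * (1 + ε) ≤ ε * ρ) (hbest : ∀ a, ∃ r, ρ ≤ v a r (p r)) :
    RatioEF v ε π p ∧ ∀ a, 0 ≤ v a (π a) (p (π a)) := by
  have hown : ∀ a, ρ ≤ v a (π a) (p (π a)) + δ := by
    intro a
    obtain ⟨r, hr⟩ := hbest a
    rcases le_max_iff.1 (hr.trans (h a r)) with h' | h'
    · exact h'
    · linarith
  refine ⟨fun a r => ?_, fun a => by nlinarith [hown a]⟩
  calc v a r (p r) ≤ v a (π a) (p (π a)) + δ := by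
        simpa [max_eq_left (hρ.le.trans (hown a))] using h a r
    _ ≤ (1 + ε) * v a (π a) (p (π a)) := by nlinarith [hown a]

theorem exists_le_sub_div_card_of_sum_add_le [Fintype ι] [Nonempty ι] {p q : ι → ℝ} {γ : ℝ}
    (h : ∑ i, p i + γ ≤ ∑ i, q i) : ∃ i, p i ≤ q i - γ / Fintype.card ι := by
  have hcard : (Fintype.card ι : ℝ) ≠ 0 := by positivity
  obtain ⟨i, -, hi⟩ := exists_le_of_sum_le (s := univ) (f := p)
    (g := fun i => q i - γ / Fintype.card ι) univ_nonempty (by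
      rw [sum_sub_distrib, sum_const, card_univ, nsmul_eq_mul, mul_div_cancel₀ _ hcard]
      linarith)
  exact ⟨i, hi⟩

theorem exists_ratioEF_of_add_le_sum [Fintype ι] [Nonempty ι] {z : ι → ι → ℝ} {ε γ C : ℝ}
    (hcont : ∀ a r, Continuous (v a r)) (hanti : ∀ a r, StrictAnti (v a r))
    (hz : ∀ a r, v a r (z a r) = 0) (hε : 0 < ε) (hγ : 0 < γ)
    (hsum_z : ∀ a, C + γ ≤ ∑ r, z a r) :
    ∃ π p, RatioEF v ε π p ∧ ∑ r, p r = C ∧ ∀ a, 0 ≤ v a (π a) (p (π a)) := by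
  obtain ⟨ρ, hρ, hρle⟩ := exists_pos_forall_le
    (c := fun ar : ι × ι => v ar.1 ar.2 (z ar.1 ar.2 - γ / Fintype.card ι)) fun ⟨a, r⟩ =>
      hz a r ▸ hanti a r (sub_lt_self _ (by positivity))
  set δ := ε * ρ / (1 + ε)
  have hδ : 0 < δ := by positivity
  let pmax : ι → ℝ := fun r => univ.sup' univ_nonempty fun a => z a r
  have hz_le : ∀ a r, z a r ≤ pmax r := fun a r => le_sup' (fun a => z a r) (mem_univ a)
  have hinit : C ≤ ∑ r, pmax r := by
    obtain ⟨a⟩ := ‹Nonempty ι›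
    linarith [hsum_z a, Finset.sum_le_sum (s := Finset.univ) fun r _ => hz_le a r]
  obtain ⟨π, p, ⟨⟨hC, hpmax⟩, hp⟩, hmax⟩ := exists_forall_ge_of_isCompact_of_finite (f := welfare v)
    (fun π => (isCompact_setOf_le_sum_and_le C pmax).inter_right
      (isClosed_setOf_additiveEF hcont δ π))
    (fun π => (continuous_welfare hcont π).continuousOn)
    ⟨1, pmax, ⟨hinit, le_rfl⟩,
      AdditiveEF.of_nonpos fun a r => hz a r ▸ (hanti a r).antitone (hz_le a r)⟩
  have hsum : ∑ r, p r = C := by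
    refine le_antisymm (not_lt.1 fun hlt => ?_) hC
    obtain ⟨π', p', h', hle, hs, hlt'⟩ := hp.exists_welfare_lt hcont hanti hδ (sub_pos.2 hlt)
    exact hlt'.not_ge (hmax π' p' ⟨⟨by linarith, hle.trans hpmax⟩, h'⟩)
  have hbest : ∀ a, ∃ r, ρ ≤ v a r (p r) := fun a => by
    obtain ⟨r, hr⟩ := exists_le_sub_div_card_of_sum_add_le (p := p) (q := z a) (γ := γ)
      (by linarith [hsum_z a])
    exact ⟨r, (hρle (a, r)).trans ((hanti a r).antitone hr)⟩
  obtain ⟨hratio, hnonneg⟩ := hp.ratioEF hε.le hρ (div_mul_cancel₀ _ (by positivity)).le hbest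
  exact ⟨π, p, hratio, hsum, hnonneg⟩

theorem exists_ratioEF_of_forall_sub [Fintype ι] {z : ι → ι → ℝ} {ε C : ℝ}
    (hcont : ∀ a r, Continuous (v a r)) (hanti : ∀ a r, StrictAnti (v a r))
    (hz : ∀ a r, v a r (z a r) = 0)
    (h : ∀ γ > 0, ∃ π p, RatioEF v ε π p ∧ ∑ r, p r = C - γ ∧ ∀ a, 0 ≤ v a (π a) (p (π a))) :
    ∃ π p, RatioEF v ε π p ∧ ∑ r, p r = C ∧ ∀ a, 0 ≤ v a (π a) (p (π a)) := by
  let S : Equiv.Perm ι → Set (ι → ℝ) := fun π =>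
    {p | RatioEF v ε π p ∧ (∀ a, 0 ≤ v a (π a) (p (π a))) ∧ C - 1 ≤ ∑ r, p r ∧ ∑ r, p r ≤ C}
  have hS : ∀ π, IsCompact (S π) := by
    intro π
    have hsum : Continuous fun p : ι → ℝ => ∑ r, p r :=
      continuous_finsetSum _ fun r _ => continuous_apply r
    have hnonneg : IsClosed {p : ι → ℝ | ∀ a, 0 ≤ v a (π a) (p (π a))} := by
      simp only [ofPred_forall]
      exact isClosed_iInter fun a => isClosed_le continuous_const (by fun_prop)
    refine (isCompact_setOf_le_sum_and_le (C - 1) fun r => z (π.symm r) r).of_isClosed_subset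
      ((isClosed_setOf_ratioEF hcont ε π).inter (hnonneg.inter
        ((isClosed_le continuous_const hsum).inter (isClosed_le hsum continuous_const))))
      fun p ⟨_, hp, hlo, _⟩ => ⟨hlo, fun r => ?_⟩
    have := hp (π.symm r)
    rwa [π.apply_symm_apply, ← hz (π.symm r) r, (hanti _ r).le_iff_ge] at this
  obtain ⟨π, p, ⟨hratio, hnonneg, -, hle⟩, hmax⟩ :=
    exists_forall_ge_of_isCompact_of_finite hS (f := fun _ p => ∑ r, p r)
      (fun _ => (continuous_finsetSum _ fun r _ => continuous_apply r).continuousOn)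
      (let ⟨π, p, hr, hs, hn⟩ := h 1 one_pos; ⟨π, p, hr, hn, hs.ge, by linarith⟩)
  refine ⟨π, p, hratio, le_antisymm hle (le_of_forall_pos_le_add fun γ hγ => ?_), hnonneg⟩
  obtain ⟨π', p', hr, hs, hn⟩ := h (min γ 1) (lt_min hγ one_pos)
  have hγ' : 0 ≤ min γ 1 := le_min hγ.le zero_le_one
  have := hmax π' p' ⟨hr, hn, by linarith [min_le_right γ 1], by linarith⟩
  linarith [min_le_left γ 1]

theorem exists_eps_envy_free_fixed_rent_nonneg_utils_general
    (n : ℕ) (hn : 0 < n) (v : Fin n → Fin n → ℝ → ℝ)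
    (hcont : ∀ a r, Continuous (v a r))
    (hanti : ∀ a r, StrictAnti (v a r))
    (ε : ℝ) (hε : 0 < ε) (C : ℝ)
    (z : Fin n → Fin n → ℝ)
    (hz : ∀ a r, v a r (z a r) = 0)
    (hscale : ∀ a, C ≤ ∑ r, z a r) :
    ∃ (π : Equiv.Perm (Fin n)) (p : Fin n → ℝ),
      EpsEF n ε v π p ∧ (∑ r, p r) = C ∧
      ∀ a, 0 ≤ v a (π a) (p (π a)) := by
  have : Nonempty (Fin n) := ⟨⟨0, hn⟩⟩
  obtain ⟨π, p, hratio, hsum, hnonneg⟩ := exists_ratioEF_of_forall_sub hcont hanti hz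
    fun γ hγ => exists_ratioEF_of_add_le_sum hcont hanti hz hε hγ fun a => by
      simpa using hscale a
  exact ⟨π, p, fun a => ⟨fun _ => hratio a, fun hneg => absurd hneg (hnonneg a).not_gt⟩,
    hsum, hnonneg⟩

/-- Theorem 3.4 (existence content): fixed total rent with nonnegative
utilities, under the scaling assumption `∑_r z a r ≥ C` where `z a r` is the
zero-utility price of room `r` for agent `a`. -/
theorem exists_eps_envy_free_fixed_rent_nonneg_utils
    (n : ℕ) (hn : 0 < n) (v : Fin n → Fin n → ℝ → ℝ)
    (hcont : ∀ a r, Continuous (v a r))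
    (hanti : ∀ a r, StrictAnti (v a r))
    (hpl : ∀ a r, PiecewiseLinear (v a r))
    (hnonneg : ∀ a r, 0 ≤ v a r 0)
    (ε : ℝ) (hε : 0 < ε) (C : ℝ)
    (z : Fin n → Fin n → ℝ)
    (hz : ∀ a r, v a r (z a r) = 0)
    (hscale : ∀ a, C ≤ ∑ r, z a r) :
    ∃ (π : Equiv.Perm (Fin n)) (p : Fin n → ℝ),
      EpsEF n ε v π p ∧ (∑ r, p r) = C ∧
      ∀ a, 0 ≤ v a (π a) (p (π a)) :=
  exists_eps_envy_free_fixed_rent_nonneg_utils_general n hn v hcont hanti ε hε C z hz hscale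
end

section
/- Approximation transfer lemma (core of the proof of Lemma 5.5): Let ε > 0 and let v, v̄ : Fin n → Fin n → ℝ → ℝ be utilities such that for all agents a, rooms r, and prices x: (i) v a r x ≤ v̄ a r x; (ii) v a r x ≥ 0 ↔ v̄ a r x ≥ 0; (iii) if v a r x ≥ 0 then v̄ a r x ≤ (1+ε) · v a r x; and (iv) if v a r x < 0 then (1+ε) · v̄ a r x ≤ v a r x. Then every envy-free solution (π, p) of the instance with utilities v̄ is an ε-envy-free solution of the instance with utilities v. -/
theorem approximation_transfer_general
    (n : ℕ) (ε : ℝ) (hε : 0 < ε)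
    (v vbar : Fin n → Fin n → ℝ → ℝ)
    (h₁ : ∀ a r x, v a r x ≤ vbar a r x)
    (h₃ : ∀ a r x, 0 ≤ v a r x → vbar a r x ≤ (1 + ε) * v a r x)
    (h₄ : ∀ a r x, v a r x < 0 → (1 + ε) * vbar a r x ≤ v a r x)
    (π : Equiv.Perm (Fin n)) (p : Fin n → ℝ)
    (hEF : ∀ a r, vbar a r (p r) ≤ vbar a (π a) (p (π a))) :
    EpsEF n ε v π p := by
  intro a
  have below_own_vbar : ∀ r, v a r (p r) ≤ vbar a (π a) (p (π a)) :=
    fun r => (h₁ a r (p r)).trans (hEF a r)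
  refine ⟨fun hpos r => ?_, fun hneg r => ?_⟩
  · exact (below_own_vbar r).trans (h₃ a (π a) (p (π a)) hpos)
  · calc (1 + ε) * v a r (p r) ≤ (1 + ε) * vbar a (π a) (p (π a)) :=
          mul_le_mul_of_nonneg_left (below_own_vbar r) (by linarith)
      _ ≤ v a (π a) (p (π a)) := h₄ a (π a) (p (π a)) hneg

/-- Approximation transfer lemma (core of the proof of Lemma 5.5). -/
theorem approximation_transfer
    (n : ℕ) (ε : ℝ) (hε : 0 < ε)
    (v vbar : Fin n → Fin n → ℝ → ℝ)
    (h₁ : ∀ a r x, v a r x ≤ vbar a r x)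
    (h₂ : ∀ a r x, 0 ≤ v a r x ↔ 0 ≤ vbar a r x)
    (h₃ : ∀ a r x, 0 ≤ v a r x → vbar a r x ≤ (1 + ε) * v a r x)
    (h₄ : ∀ a r x, v a r x < 0 → (1 + ε) * vbar a r x ≤ v a r x)
    (π : Equiv.Perm (Fin n)) (p : Fin n → ℝ)
    (hEF : ∀ a r, vbar a r (p r) ≤ vbar a (π a) (p (π a))) :
    EpsEF n ε v π p :=
  approximation_transfer_general n ε hε v vbar h₁ h₃ h₄ π p hEF
end

section
/- Lemma 5.2 (per-piece rounding properties): Fix ε > 0, real numbers x₁ < x₂, λ > 0, and H ∈ ℝ, and set B := H − λ·(x₂ − x₁). Let λ̄ := (1+ε)^⌈log λ / log(1+ε)⌉ be the least integer power of (1+ε) that is ≥ λ (so that λ̄/(1+ε) < λ ≤ λ̄). Then: (1) there exists x* with x₁ ≤ x* < x₂ such that H = B + λ̄·(x₂ − x*) + (λ̄/(1+ε))·(x* − x₁); and (2) for any such x*, defining v(x) := H − λ·(x − x₁), and v̄(x) := H − (λ̄/(1+ε))·(x − x₁) for x < x* and v̄(x) := B + λ̄·(x₂ − x) for x ≥ x*,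 the following hold for all x with x₁ ≤ x ≤ x₂: (a) v̄(x) ≥ v(x); (b) B + λ̄·(x₂ − x) ≥ v̄(x); (c) H − (λ̄/(1+ε))·(x − x₁) ≥ v̄(x); (d) if B ≥ 0 then v̄(x) ≥ 0; (e) if H ≤ 0 then v̄(x) ≤ 0. -/
/-!
Rounding `λ` up to `λ̄ = (1+ε)^k` puts it between the two slopes `λ̄/(1+ε) < λ ≤ λ̄`, so the
segment of slope `λ` from `(x₁, H)` to `(x₂, B)` can be replaced by a slope-`λ̄/(1+ε)` line from
`(x₁, H)` followed by a slope-`λ̄` line into `(x₂, B)`, meeting at some `x*`. The key observation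
is that the resulting piecewise function is the minimum of these two lines; every bound is then a
comparison of lines on `[x₁, x₂]`.
-/

open Real

lemma le_zpow_ceil_log_div_log {b y : ℝ} (hb : 1 < b) (hy : 0 < y) :
    y ≤ b ^ ⌈log y / log b⌉ := by
  rw [← rpow_intCast, le_rpow_iff_log_le hy (by linarith), ← div_le_iff₀ (log_pos hb)]
  exact Int.le_ceil _

lemma zpow_ceil_log_div_log_div_lt {b y : ℝ} (hb : 1 < b) (hy : 0 < y) :
    b ^ ⌈log y / log b⌉ / b < y := by
  rw [div_eq_mul_inv, ← zpow_sub_one₀ (by positivity), ← rpow_intCast, rpow_lt_iff_lt_log (by linarith) hy,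
    ← lt_div_iff₀ (log_pos hb)]
  push_cast
  linarith [Int.ceil_lt_add_one (log y / log b)]

section TwoSlopes

variable {a b lam x₁ x₂ xs x B H : ℝ}

lemma exists_breakpoint (hx : x₁ < x₂) (ha : a < lam) (hb : lam ≤ b) :
    ∃ xs, x₁ ≤ xs ∧ xs < x₂ ∧ lam * (x₂ - x₁) = b * (x₂ - xs) + a * (xs - x₁) := by
  have hba : 0 < b - a := by linarith
  refine ⟨x₁ + (b - lam) / (b - a) * (x₂ - x₁), ?_, ?_, ?_⟩
  · have : 0 ≤ (b - lam) / (b - a) := div_nonneg (by linarith) hba.le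
    nlinarith
  · have : (b - lam) / (b - a) < 1 := (div_lt_one hba).mpr (by linarith)
    nlinarith
  · field_simp
    ring

lemma ite_eq_min_of_breakpoint (hab : a ≤ b)
    (hxs : H = B + b * (x₂ - xs) + a * (xs - x₁)) :
    (if x < xs then H - a * (x - x₁) else B + b * (x₂ - x)) =
      min (B + b * (x₂ - x)) (H - a * (x - x₁)) := by
  -- the difference of the two lines is `(b - a) * (xs - x)`
  split_ifs with h
  · exact (min_eq_right (by nlinarith)).symm
  · exact (min_eq_left (by nlinarith)).symm

end TwoSlopes

/-- Lemma 5.2 (per-piece rounding properties). -/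
theorem per_piece_rounding
    (ε x₁ x₂ lam H : ℝ) (hε : 0 < ε) (hx : x₁ < x₂) (hlam : 0 < lam)
    (B lb : ℝ)
    (hB : B = H - lam * (x₂ - x₁))
    (hlb : lb = (1 + ε) ^ (⌈Real.log lam / Real.log (1 + ε)⌉ : ℤ)) :
    lb / (1 + ε) < lam ∧ lam ≤ lb ∧
    (∃ xs, x₁ ≤ xs ∧ xs < x₂ ∧
      H = B + lb * (x₂ - xs) + (lb / (1 + ε)) * (xs - x₁)) ∧
    (∀ xs, x₁ ≤ xs → xs < x₂ →
      H = B + lb * (x₂ - xs) + (lb / (1 + ε)) * (xs - x₁) →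
      ∀ x, x₁ ≤ x → x ≤ x₂ →
        (H - lam * (x - x₁) ≤
          (if x < xs then H - (lb / (1 + ε)) * (x - x₁)
            else B + lb * (x₂ - x))) ∧
        ((if x < xs then H - (lb / (1 + ε)) * (x - x₁)
            else B + lb * (x₂ - x)) ≤ B + lb * (x₂ - x)) ∧
        ((if x < xs then H - (lb / (1 + ε)) * (x - x₁)
            else B + lb * (x₂ - x)) ≤ H - (lb / (1 + ε)) * (x - x₁)) ∧
        (0 ≤ B → 0 ≤
          (if x < xs then H - (lb / (1 + ε)) * (x - x₁)
            else B + lb * (x₂ - x))) ∧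
        (H ≤ 0 →
          (if x < xs then H - (lb / (1 + ε)) * (x - x₁)
            else B + lb * (x₂ - x)) ≤ 0)) := by
  have hbase : 1 < 1 + ε := by linarith
  have hlt : lb / (1 + ε) < lam := hlb ▸ zpow_ceil_log_div_log_div_lt hbase hlam
  have hle : lam ≤ lb := hlb ▸ le_zpow_ceil_log_div_log hbase hlam
  have hlb₀ : 0 < lb := hlam.trans_le hle
  have hab : lb / (1 + ε) ≤ lb := div_le_self hlb₀.le hbase.le
  have ha₀ : 0 ≤ lb / (1 + ε) := by positivity
  refine ⟨hlt, hle, ?_, ?_⟩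
  · obtain ⟨xs, hxs₁, hxs₂, hsplit⟩ := exists_breakpoint hx hlt hle
    exact ⟨xs, hxs₁, hxs₂, by linarith⟩
  · intro xs _ _ hxs x hx₁ hx₂
    rw [ite_eq_min_of_breakpoint hab hxs]
    have hv : H - lam * (x - x₁) ≤ min (B + lb * (x₂ - x)) (H - lb / (1 + ε) * (x - x₁)) :=
      le_min (by nlinarith) (by nlinarith)
    refine ⟨hv, min_le_left _ _, min_le_right _ _, fun hB₀ => ?_, fun hH => ?_⟩
    · exact le_trans (by nlinarith) hv
    · exact (min_le_right _ _).trans (by nlinarith)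
end

section
/- Lemma B.1 (characterization of envy-free allocations under quasilinear utilities): Let B : Fin n → Fin n → ℝ be base values, giving quasilinear utilities v a r x := B a r − x. For every permutation π of Fin n, the following are equivalent: (i) there exists a price vector p : Fin n → ℝ such that B a (π a) − p (π a) ≥ B a r − p r for all agents a and rooms r (i.e., π can be coupled with a price vector to form an envy-free solution); (ii) π is a maximum-weight perfect matching, i.e., ∑_a B a (σ a) ≤ ∑_a B a (π a) for every permutation σ of Fin n. -/
/-!
Summing the envy-freeness inequalities along any permutation `σ` makes the prices cancel, which
gives maximality of `π`. Conversely, index by rooms and let `w s r` be what the owner of room `s`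
under `π` loses by moving to room `r`. Maximality of `π` says that `∑ s, w s (σ s) ≥ 0` for
all `σ`; applied to the cyclic permutation of a simple cycle, it says that no cycle of the complete
digraph weighted by `w` is negative. Then cycles can be cut out of walks, so walk costs are
bounded below by the finitely many costs of simple paths, and the cheapest-walk cost `p s` from
each room is a potential: `p s ≤ w s r + p r`, which is exactly envy-freeness at prices `p`.
-/

open Finset

variable {α : Type*} (w : α → α → ℝ)

def walkCost : List α → ℝ
  | [] => 0
  | [_] => 0
  | a :: b :: l => w a b + walkCost (b :: l)

@[simp] lemma walkCost_singleton (a : α) : walkCost w [a] = 0 := rfl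
@[simp] lemma walkCost_cons_cons (a b : α) (l : List α) :
    walkCost w (a :: b :: l) = w a b + walkCost w (b :: l) := rfl

lemma walkCost_append_cons (l₁ : List α) (x : α) (l₂ : List α) :
    walkCost w (l₁ ++ x :: l₂) = walkCost w (l₁ ++ [x]) + walkCost w (x :: l₂) := by
  induction l₁ with
  | nil => simp
  | cons a l ih => cases l <;> simp_all [add_assoc]

lemma walkCost_cons_eq_sum_zipWith (s : α) (l : List α) :
    walkCost w (s :: l) = (List.zipWith w (s :: l) l).sum := by
  induction l generalizing s <;> simp_all

lemma sum_apply_formPerm_eq_sum_zipWith_rotate [Fintype α] [DecidableEq α]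
    (hdiag : ∀ s, w s s = 0) {L : List α} (hL : L.Nodup) :
    ∑ s, w s (L.formPerm s) = (List.zipWith w L (L.rotate 1)).sum := by
  have hmap : L.map (fun s => w s (L.formPerm s)) = List.zipWith w L (L.rotate 1) := by
    refine List.ext_getElem (by simp) fun i h₁ h₂ => ?_
    simp [List.formPerm_apply_getElem _ hL, List.getElem_rotate]
  rw [← hmap, ← List.sum_toFinset _ hL]
  refine (sum_subset (subset_univ _) fun s _ hs => ?_).symm
  rw [List.formPerm_apply_of_notMem (by simpa using hs), hdiag]

lemma walkCost_cycle_eq_sum_formPerm [Fintype α] [DecidableEq α] (hdiag : ∀ s, w s s = 0)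
    {x : α} {c : List α} (hc : (x :: c).Nodup) :
    walkCost w (x :: c ++ [x]) = ∑ s, w s ((x :: c).formPerm s) := by
  rw [sum_apply_formPerm_eq_sum_zipWith_rotate w hdiag hc, List.cons_append,
    walkCost_cons_eq_sum_zipWith, ← List.cons_append, ← List.append_nil (c ++ [x]),
    List.zipWith_append (by simp)]
  simp

lemma List.exists_nodup_cycle_of_not_nodup {L : List α} (hL : ¬ L.Nodup) :
    ∃ l₁ x l₂ l₃, L = l₁ ++ x :: l₂ ++ x :: l₃ ∧ (x :: l₂).Nodup := by
  induction L with
  | nil => exact absurd List.nodup_nil hL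
  | cons a t ih =>
    by_cases ht : t.Nodup
    · have ha : a ∈ t := by_contra fun ha => hL (List.nodup_cons.mpr ⟨ha, ht⟩)
      obtain ⟨l₂, l₃, rfl⟩ := List.append_of_mem ha
      obtain ⟨hl₂, -, hdisj⟩ := List.nodup_append.1 ht
      refine ⟨[], a, l₂, l₃, rfl, List.nodup_cons.2 ⟨fun h => ?_, hl₂⟩⟩
      exact hdisj a h a List.mem_cons_self rfl
    · obtain ⟨l₁, x, l₂, l₃, rfl, hnd⟩ := ih ht
      exact ⟨a :: l₁, x, l₂, l₃, rfl, hnd⟩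

def NoNegativeCycle : Prop :=
  ∀ x c, (x :: c).Nodup → 0 ≤ walkCost w (x :: c ++ [x])

variable {w}

lemma exists_nodup_walkCost_le
    (hcycle : NoNegativeCycle w) (L : List α) :
    ∃ L', L'.Nodup ∧ walkCost w L' ≤ walkCost w L := by
  induction h : L.length using Nat.strong_induction_on generalizing L with
  | _ n ih =>
  by_cases hL : L.Nodup
  · exact ⟨L, hL, le_rfl⟩
  obtain ⟨l₁, x, l₂, l₃, rfl, hnd⟩ := List.exists_nodup_cycle_of_not_nodup hL
  have hshorter : (l₁ ++ x :: l₃).length < n := by simp [← h]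
  obtain ⟨L', hL', hle⟩ := ih _ hshorter _ rfl
  refine ⟨L', hL', hle.trans ?_⟩
  have hsplit : walkCost w (l₁ ++ x :: l₂ ++ x :: l₃) =
      walkCost w (l₁ ++ [x]) + walkCost w (x :: l₂ ++ [x]) + walkCost w (x :: l₃) := by
    rw [List.append_assoc, List.cons_append, walkCost_append_cons w l₁, ← List.cons_append,
      walkCost_append_cons w (x :: l₂), add_assoc]
  rw [hsplit, walkCost_append_cons w l₁]
  linarith [hcycle x l₂ hnd]

lemma bddBelow_range_walkCost [Fintype α]
    (hcycle : NoNegativeCycle w) :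
    BddBelow (Set.range (walkCost w)) := by
  obtain ⟨m, hm⟩ := (Set.finite_range fun L : {L : List α // L.Nodup} => walkCost w L).bddBelow
  refine ⟨m, ?_⟩
  rintro _ ⟨L, rfl⟩
  obtain ⟨L', hL', hle⟩ := exists_nodup_walkCost_le hcycle L
  exact (hm (Set.mem_range_self (⟨L', hL'⟩ : {L : List α // L.Nodup}))).trans hle

lemma exists_potential_of_noNegativeCycle [Fintype α]
    (hcycle : NoNegativeCycle w) :
    ∃ p : α → ℝ, ∀ s r, p s ≤ p r + w s r := by
  have hbdd (s : α) : BddBelow (Set.range fun l => walkCost w (s :: l)) :=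
    (bddBelow_range_walkCost hcycle).mono <|
      Set.range_subset_iff.2 fun l => Set.mem_range_self (s :: l)
  refine ⟨fun s => ⨅ l, walkCost w (s :: l), fun s r => ?_⟩
  rw [← sub_le_iff_le_add]
  refine le_ciInf fun l => ?_
  have := ciInf_le (hbdd s) (r :: l)
  rw [walkCost_cons_cons] at this
  linarith

lemma exists_potential_of_sum_perm_nonneg [Fintype α] [DecidableEq α] (hdiag : ∀ s, w s s = 0)
    (hperm : ∀ σ : Equiv.Perm α, 0 ≤ ∑ s, w s (σ s)) :
    ∃ p : α → ℝ, ∀ s r, p s ≤ p r + w s r :=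
  exists_potential_of_noNegativeCycle fun _ _ hc =>
    walkCost_cycle_eq_sum_formPerm w hdiag hc ▸ hperm _

variable [Fintype α] {B : α → α → ℝ} {π : Equiv.Perm α}

theorem sum_le_sum_of_envyFree {p : α → ℝ}
    (hp : ∀ a r, B a r - p r ≤ B a (π a) - p (π a)) (σ : Equiv.Perm α) :
    ∑ a, B a (σ a) ≤ ∑ a, B a (π a) := by
  have h := sum_le_sum fun a (_ : a ∈ univ) => hp a (σ a)
  rwa [sum_sub_distrib, sum_sub_distrib, Equiv.sum_comp σ p, Equiv.sum_comp π p,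
    sub_le_sub_iff_right] at h

theorem exists_envyFree_prices_of_forall_sum_le [DecidableEq α]
    (hmax : ∀ σ : Equiv.Perm α, ∑ a, B a (σ a) ≤ ∑ a, B a (π a)) :
    ∃ p : α → ℝ, ∀ a r, B a r - p r ≤ B a (π a) - p (π a) := by
  obtain ⟨p, hp⟩ := exists_potential_of_sum_perm_nonneg
    (w := fun s r => B (π.symm s) s - B (π.symm s) r) (fun _ => sub_self _) fun σ => by
      rw [← Equiv.sum_comp π]
      simpa only [Equiv.symm_apply_apply, sum_sub_distrib, sub_nonneg,
        Equiv.trans_apply] using hmax (π.trans σ)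
  refine ⟨p, fun a r => ?_⟩
  have := hp (π a) r
  simp only [Equiv.symm_apply_apply] at this
  linarith

/-- Lemma B.1: under quasilinear utilities `v a r x = B a r - x`, a
permutation can be coupled with prices to form an envy-free solution iff it
is a maximum-weight perfect matching with respect to the base values. -/
theorem quasilinear_envy_free_characterization
    (n : ℕ) (B : Fin n → Fin n → ℝ) (π : Equiv.Perm (Fin n)) :
    (∃ p : Fin n → ℝ, ∀ a r, B a r - p r ≤ B a (π a) - p (π a)) ↔
    (∀ σ : Equiv.Perm (Fin n), (∑ a, B a (σ a)) ≤ ∑ a, B a (π a)) :=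
  ⟨fun ⟨_, hp⟩ => sum_le_sum_of_envyFree hp, exists_envyFree_prices_of_forall_sum_le⟩
end

section
/- Envy-freeness is preserved under switching to any maximum-weight matching in the quasilinear case (proved inside Lemma B.1): Let B : Fin n → Fin n → ℝ give quasilinear utilities v a r x := B a r − x, and let (π, p) be an envy-free solution. If σ is a permutation of Fin n with ∑_a B a (τ a) ≤ ∑_a B a (σ a) for every permutation τ (σ is a maximum-weight perfect matching with respect to B), then (σ, p) is also an envy-free solution, and moreover B a (σ a) − p (σ a) = B a (π a) − p (π a) for every agent a. -/
/-!
Under quasilinear utilities the total utility of an assignment `τ` at prices `p` is its weight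
`∑ a, B a (τ a)` minus the total price, which does not depend on `τ`. Envy-freeness of `π` makes
every agent weakly prefer her `π`-room to her `σ`-room, while maximality of `σ` makes the total
utility under `σ` at least that under `π`; so the pointwise inequalities are all equalities, and
each agent's `σ`-room is as good as her `π`-room, hence as good as any room.
-/

section QuasilinearMatching

variable {ι β : Type*} [Fintype ι] [AddCommGroup β] (B : ι → ι → β) (p : ι → β)

theorem sum_sub_comp_perm (τ : Equiv.Perm ι) :
    ∑ a, (B a (τ a) - p (τ a)) = ∑ a, B a (τ a) - ∑ r, p r := by
  rw [Finset.sum_sub_distrib, Equiv.sum_comp τ p]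

theorem utility_eq_of_envyFree_of_weight_le [PartialOrder β] [IsOrderedAddMonoid β]
    {π σ : Equiv.Perm ι}
    (hEF : ∀ a r, B a r - p r ≤ B a (π a) - p (π a))
    (hweight : ∑ a, B a (π a) ≤ ∑ a, B a (σ a)) (a : ι) :
    B a (σ a) - p (σ a) = B a (π a) - p (π a) := by
  have hsum : ∑ a, (B a (π a) - p (π a)) ≤ ∑ a, (B a (σ a) - p (σ a)) := by
    rw [sum_sub_comp_perm, sum_sub_comp_perm]
    exact sub_le_sub_right hweight _
  exact (Finset.sum_eq_sum_iff_of_le fun a _ ↦ hEF a (σ a)).mp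
    (le_antisymm (Finset.sum_le_sum fun a _ ↦ hEF a (σ a)) hsum) a (Finset.mem_univ a)

end QuasilinearMatching

/-- Switching to any maximum-weight matching preserves envy-freeness in the
quasilinear case (proved inside Lemma B.1), and utilities are unchanged. -/
theorem quasilinear_switch_matching
    (n : ℕ) (B : Fin n → Fin n → ℝ)
    (π : Equiv.Perm (Fin n)) (p : Fin n → ℝ)
    (hEF : ∀ a r, B a r - p r ≤ B a (π a) - p (π a))
    (σ : Equiv.Perm (Fin n))
    (hσmax : ∀ τ : Equiv.Perm (Fin n),
      (∑ a, B a (τ a)) ≤ ∑ a, B a (σ a)) :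
    (∀ a r, B a r - p r ≤ B a (σ a) - p (σ a)) ∧
    (∀ a, B a (σ a) - p (σ a) = B a (π a) - p (π a)) := by
  have hutil := utility_eq_of_envyFree_of_weight_le B p hEF (hσmax π)
  exact ⟨fun a r ↦ (hutil a).symm ▸ hEF a r, hutil⟩
end

section
/- Lemma B.2 (existence content for quasilinear utilities): Let B : Fin n → Fin n → ℝ give quasilinear utilities v a r x := B a r − x, and let π be any permutation of Fin n maximizing ∑_a B a (π a) over all permutations. Then there exists a price vector p : Fin n → ℝ with p r ≥ 0 for all rooms r such that (π, p) is an envy-free solution, i.e., B a (π a) − p (π a) ≥ B a r − p r for all agents a and rooms r. -/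
/-!
Put a complete digraph on the rooms, the edge `r → t` weighing what the occupant of `t` would gain
by moving to `r`. Maximality of `π` says that no permutation of the rooms, in particular no simple
cycle, has positive weight. Then the weight `q t` of a heaviest simple path starting at `t` is a
potential: it is nonnegative (the one-vertex path), and `w r t + q t ≤ q r`, because a simple path
from `t` preceded by the edge `r → t` either is still simple or splits into a cycle through `r`
and a simple path from `r`. These potentials are envy-free prices.
-/

open Finset

section WalkWeight

variable {V M : Type*} [AddCommMonoid M] (w : V → V → M)

def walkWeight (l : List V) : M := (List.zipWith w l l.tail).sum

@[simp] lemma walkWeight_singleton (a : V) : walkWeight w [a] = 0 := rfl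

@[simp] lemma walkWeight_cons_cons (a b : V) (l : List V) :
    walkWeight w (a :: b :: l) = w a b + walkWeight w (b :: l) := by
  simp [walkWeight]

lemma walkWeight_append_cons (l m : List V) (a : V) :
    walkWeight w (l ++ a :: m) = walkWeight w (l ++ [a]) + walkWeight w (a :: m) := by
  induction l with
  | nil => simp
  | cons b l ih =>
    cases l with
    | nil => simp
    | cons c l =>
      simp only [List.cons_append, walkWeight_cons_cons] at ih ⊢
      rw [ih, add_assoc]

lemma walkWeight_cycle_eq_sum_formPerm [DecidableEq V] {a : V} {l : List V}
    (h : (a :: l).Nodup) :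
    walkWeight w (a :: l ++ [a]) = ∑ u ∈ (a :: l).toFinset, w u ((a :: l).formPerm u) := by
  have hmap : (a :: l).map (fun u => w u ((a :: l).formPerm u)) =
      List.zipWith w (a :: l) (l ++ [a]) := by
    have hrot : (a :: l).rotate 1 = l ++ [a] := by simp
    rw [← hrot]
    refine List.ext_getElem (by simp) fun i _ _ => ?_
    rw [List.getElem_map, List.getElem_zipWith, List.formPerm_apply_getElem _ h,
      List.getElem_rotate]
  have htrunc := List.zipWith_append (f := w) (l₁ := a :: l) (l₁' := [a]) (l₂ := l ++ [a])
    (l₂' := []) (by simp)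
  rw [List.sum_toFinset _ h, hmap, walkWeight]
  simpa using congrArg List.sum htrunc

end WalkWeight

section Potential

variable {V : Type*} [Fintype V] (w : V → V → ℝ)

lemma walkWeight_cycle_nonpos [DecidableEq V] (hdiag : ∀ u, w u u = 0)
    (hperm : ∀ τ : Equiv.Perm V, ∑ u, w u (τ u) ≤ 0) {a : V} {l : List V}
    (h : (a :: l).Nodup) : walkWeight w (a :: l ++ [a]) ≤ 0 := by
  rw [walkWeight_cycle_eq_sum_formPerm w h,
    sum_subset (subset_univ _) fun u _ hu => by
      rw [List.formPerm_apply_of_notMem (by simpa using hu), hdiag]]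
  exact hperm _

noncomputable def maxPathWeight (t : V) : ℝ :=
  ⨆ l : {l : List V // (t :: l).Nodup}, walkWeight w (t :: l.1)

lemma bddAbove_range_pathWeight (t : V) :
    BddAbove (Set.range fun l : {l : List V // (t :: l).Nodup} => walkWeight w (t :: l.1)) := by
  have : Finite {l : List V // (t :: l).Nodup} :=
    .of_injective (fun l => (⟨l.1, l.2.of_cons⟩ : {l : List V // l.Nodup}))
      fun _ _ h => Subtype.ext (congrArg Subtype.val h :)
  exact (Set.finite_range _).bddAbove

lemma walkWeight_le_maxPathWeight {t : V} {l : List V} (h : (t :: l).Nodup) :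
    walkWeight w (t :: l) ≤ maxPathWeight w t :=
  le_ciSup (f := fun l : {l : List V // (t :: l).Nodup} => walkWeight w (t :: l.1))
    (bddAbove_range_pathWeight w t) ⟨l, h⟩

lemma maxPathWeight_nonneg (t : V) : 0 ≤ maxPathWeight w t := by
  simpa using walkWeight_le_maxPathWeight w (List.nodup_singleton t)

lemma add_maxPathWeight_le (hcyc : ∀ a l, (a :: l).Nodup → walkWeight w (a :: l ++ [a]) ≤ 0)
    (s t : V) : w s t + maxPathWeight w t ≤ maxPathWeight w s := by
  have : Nonempty {l : List V // (t :: l).Nodup} := ⟨⟨[], List.nodup_singleton t⟩⟩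
  rw [← le_sub_iff_add_le', maxPathWeight]
  refine ciSup_le fun ⟨l, hl⟩ => le_sub_iff_add_le'.mpr ?_
  rw [← walkWeight_cons_cons]
  by_cases hs : s ∈ t :: l
  · obtain ⟨x, y, hxy⟩ := List.append_of_mem hs
    rw [hxy] at hl ⊢
    have hcycle : (s :: x).Nodup :=
      (List.nodup_middle.mp hl).sublist ((List.sublist_append_left x y).cons_cons s)
    have hpath : (s :: y).Nodup := hl.sublist (List.sublist_append_right x (s :: y))
    calc walkWeight w (s :: (x ++ s :: y))
        = walkWeight w (s :: x ++ [s]) + walkWeight w (s :: y) := by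
          rw [← List.cons_append, walkWeight_append_cons]
      _ ≤ 0 + maxPathWeight w s :=
          add_le_add (hcyc s x hcycle) (walkWeight_le_maxPathWeight w hpath)
      _ = maxPathWeight w s := zero_add _
  · exact walkWeight_le_maxPathWeight w (List.nodup_cons.mpr ⟨hs, hl⟩)

theorem exists_potential_of_forall_perm_sum_nonpos [DecidableEq V] (hdiag : ∀ u, w u u = 0)
    (hperm : ∀ τ : Equiv.Perm V, ∑ u, w u (τ u) ≤ 0) :
    ∃ q : V → ℝ, (∀ t, 0 ≤ q t) ∧ ∀ s t, w s t + q t ≤ q s :=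
  ⟨maxPathWeight w, maxPathWeight_nonneg w,
    add_maxPathWeight_le w fun _ _ h => walkWeight_cycle_nonpos w hdiag hperm h⟩

end Potential

section Assignment

variable {α β : Type*} [Fintype α] [Fintype β] (B : α → β → ℝ) (π : α ≃ β)

def envyGain (r t : β) : ℝ := B (π.symm t) r - B (π.symm t) t

lemma sum_envyGain_perm_nonpos (hπmax : ∀ σ : α ≃ β, ∑ a, B a (σ a) ≤ ∑ a, B a (π a))
    (τ : Equiv.Perm β) : ∑ r, envyGain B π r (τ r) ≤ 0 := by
  have hmoved : ∑ r, B (π.symm (τ r)) r = ∑ a, B a ((π.trans τ.symm) a) := by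
    rw [← Equiv.sum_comp (π.trans τ.symm)]
    simp
  have hkept : ∑ r, B (π.symm (τ r)) (τ r) = ∑ a, B a (π a) := by
    rw [Equiv.sum_comp τ fun u => B (π.symm u) u, ← Equiv.sum_comp π]
    simp
  simp only [envyGain, sum_sub_distrib, hmoved, hkept, sub_nonpos]
  exact hπmax _

end Assignment

/-- Lemma B.2 (existence content for quasilinear utilities): any
maximum-weight perfect matching admits nonnegative envy-free prices. -/
theorem quasilinear_exists_envy_free_prices
    (n : ℕ) (B : Fin n → Fin n → ℝ) (π : Equiv.Perm (Fin n))
    (hπmax : ∀ σ : Equiv.Perm (Fin n),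
      (∑ a, B a (σ a)) ≤ ∑ a, B a (π a)) :
    ∃ p : Fin n → ℝ, (∀ r, 0 ≤ p r) ∧
      ∀ a r, B a r - p r ≤ B a (π a) - p (π a) := by
  obtain ⟨p, hp_nonneg, hp⟩ := exists_potential_of_forall_perm_sum_nonpos (envyGain B π)
    (fun _ => sub_self _) (sum_envyGain_perm_nonpos B π hπmax)
  refine ⟨p, hp_nonneg, fun a r => ?_⟩
  have hgain := hp r (π a)
  simp only [envyGain, Equiv.symm_apply_apply] at hgain
  linarith
end

section
/- Lemma C.1 (multiplicative quasilinear lemma): Let W : Fin n → Fin n → ℝ be nonnegative edge weights on the complete bipartite graph between n agents and n rooms (W a r ≥ 0 for all a, r). If there exists a permutation π of Fin n with W a (π a) > 0 for every a (a positive perfect matching), then there exist a permutation σ of Fin n and a vector d : Fin n → ℝ with d r > 0 for all r such that d (σ a) · W a (σ a) ≥ d r · W a r for all a and r. -/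
/-!
Choose a matching `σ` maximizing `∏ a, W a (σ a)`; it is positive. Weight the arc `a → b`
between agents by `W a (σ a) / W a (σ b)`, the factor lost when `a` moves into `b`'s room.
Maximality of `σ`, applied to `σ` composed with a cycle, says that every simple cycle has weight
at least `1`. Hence `D b`, the least weight of a simple path ending at `b`, satisfies
`D b ≤ D a * (a → b)`: a path through `b` may be cut at `b`, dropping a cycle. The prices
`d (σ b) = D b` then make every agent weakly prefer its own room.
-/

open scoped ENNReal

namespace List

variable {α M : Type*}

def pathProd [Monoid M] (e : α → α → M) : List α → M
  | a :: b :: t => e a b * pathProd e (b :: t)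
  | _ => 1

section Monoid

variable [Monoid M] (e : α → α → M)

@[simp] lemma pathProd_singleton (a : α) : pathProd e [a] = 1 := rfl

@[simp] lemma pathProd_cons_cons (a b : α) (t : List α) :
    pathProd e (a :: b :: t) = e a b * pathProd e (b :: t) := rfl

lemma pathProd_append_cons (u : List α) (a : α) (t : List α) :
    pathProd e (u ++ a :: t) = pathProd e (u ++ [a]) * pathProd e (a :: t) := by
  induction u with
  | nil => simp
  | cons b u ih =>
    cases u with
    | nil => simp
    | cons c u => simp only [cons_append, pathProd_cons_cons] at ih ⊢; rw [ih, mul_assoc]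

lemma pathProd_append_pair (u : List α) (a b : α) :
    pathProd e (u ++ [a, b]) = pathProd e (u ++ [a]) * e a b := by
  simpa using pathProd_append_cons e u a [b]

lemma pathProd_eq_prod_zipWith : ∀ l : List α, pathProd e l = (zipWith e l l.tail).prod
  | [] => rfl
  | [_] => rfl
  | a :: b :: t => by simp [pathProd_eq_prod_zipWith (b :: t)]

end Monoid

lemma pathProd_ne_zero [MonoidWithZero M] [NoZeroDivisors M] [Nontrivial M]
    {e : α → α → M} (he : ∀ a b, e a b ≠ 0) : ∀ l : List α, pathProd e l ≠ 0
  | [] | [_] => one_ne_zero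
  | a :: b :: t => mul_ne_zero (he a b) (pathProd_ne_zero he (b :: t))

lemma pathProd_cycle_eq_prod_formPerm [DecidableEq α] [CommMonoid M] (e : α → α → M)
    {x : α} {t : List α} (h : (x :: t).Nodup) :
    pathProd e (x :: t ++ [x]) = ∏ y ∈ (x :: t).toFinset, e y ((x :: t).formPerm y) := by
  have hzip : zipWith e (x :: t ++ [x]) (x :: t ++ [x]).tail =
      zipWith e (x :: t) ((x :: t).rotate 1) := by
    refine ext_getElem (by simp) fun i h₁ h₂ => ?_
    simp only [getElem_zipWith]
    congr 1
    · exact getElem_append_left _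
    · simp
  have hmap : zipWith e (x :: t) ((x :: t).rotate 1) =
      (x :: t).map fun y => e y ((x :: t).formPerm y) := by
    refine ext_getElem (by simp) fun i h₁ h₂ => ?_
    simp only [getElem_zipWith, getElem_rotate, getElem_map]
    rw [formPerm_apply_getElem _ h]
  rw [prod_toFinset _ h, pathProd_eq_prod_zipWith, hzip, hmap]

end List

open List

theorem exists_potential_of_one_le_pathProd_cycle {α : Type*} [Finite α] {e : α → α → ℝ≥0∞}
    (he : ∀ a b, e a b ≠ 0)
    (hcycle : ∀ (x : α) (t : List α), (x :: t).Nodup → 1 ≤ pathProd e (x :: t ++ [x])) :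
    ∃ D : α → ℝ≥0∞, (∀ b, D b ≠ 0) ∧ (∀ b, D b ≠ ∞) ∧ ∀ a b, D b ≤ D a * e a b := by
  classical
  have hfin (b : α) : {u : List α | (u ++ [b]).Nodup}.Finite := by
    refine (finite_length_le α (Nat.card α)).subset fun u hu => ?_
    exact (hu.sublist (sublist_append_left u [b])).length_le_natCard
  choose P hP hPmin using fun b =>
    Set.exists_min_image _ (fun u => pathProd e (u ++ [b])) (hfin b) ⟨[], nodup_singleton b⟩
  refine ⟨fun b => pathProd e (P b ++ [b]), fun b => pathProd_ne_zero he _,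
    fun b => ((hPmin b [] (nodup_singleton b)).trans_lt ENNReal.one_lt_top).ne, fun a b => ?_⟩
  rw [← pathProd_append_pair]
  by_cases hb : b ∈ P a ++ [a]
  · obtain ⟨p, m, hpm⟩ := append_of_mem hb
    have hnd : (p ++ b :: m).Nodup := hpm ▸ hP a
    calc pathProd e (P b ++ [b])
        ≤ pathProd e (p ++ [b]) := hPmin b p (hnd.sublist (by simp))
      _ ≤ pathProd e (p ++ [b]) * pathProd e (b :: m ++ [b]) :=
          le_mul_of_one_le_right' (hcycle b m (hnd.sublist (by simp)))
      _ = pathProd e (P a ++ [a, b]) := by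
          rw [cons_append, ← pathProd_append_cons,
            show P a ++ [a, b] = P a ++ [a] ++ [b] by simp, hpm]
          simp
  · simpa using hPmin b (P a ++ [a]) (by simpa using (hP a).concat hb)

open Equiv

section Assignment

variable {ι : Type*} {W : ι → ι → ℝ} {σ : Perm ι}

/-- This is `∞` when room `σ b` is worthless to agent `a`. -/
noncomputable def exchangeRatio (W : ι → ι → ℝ) (σ : Perm ι) (a b : ι) : ℝ≥0∞ :=
  ENNReal.ofReal (W a (σ a)) / ENNReal.ofReal (W a (σ b))

lemma exchangeRatio_ne_zero (hσ : ∀ a, 0 < W a (σ a)) (a b : ι) : exchangeRatio W σ a b ≠ 0 :=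
  ENNReal.div_ne_zero.2 ⟨ENNReal.ofReal_pos.2 (hσ a) |>.ne', ENNReal.ofReal_ne_top⟩

lemma prod_comp_perm_le_prod_of_maximal [Fintype ι] [DecidableEq ι] (hσ : ∀ a, 0 < W a (σ a))
    (hmax : ∀ τ : Perm ι, ∏ a, W a (τ a) ≤ ∏ a, W a (σ a))
    {s : Finset ι} {π : Perm ι} (hπ : ∀ a ∉ s, π a = a) :
    ∏ a ∈ s, W a (σ (π a)) ≤ ∏ a ∈ s, W a (σ a) := by
  have h := hmax (σ * π)
  have hcompl : ∏ a ∈ sᶜ, W a ((σ * π) a) = ∏ a ∈ sᶜ, W a (σ a) :=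
    Finset.prod_congr rfl fun a ha => by rw [Perm.mul_apply, hπ a (Finset.mem_compl.1 ha)]
  rw [← Finset.prod_mul_prod_compl s, ← Finset.prod_mul_prod_compl s (fun a => W a (σ a)),
    hcompl] at h
  exact le_of_mul_le_mul_right h (Finset.prod_pos fun a _ => hσ a)

lemma one_le_pathProd_exchangeRatio_cycle [Fintype ι] [DecidableEq ι]
    (hW : ∀ a r, 0 ≤ W a r) (hσ : ∀ a, 0 < W a (σ a))
    (hmax : ∀ τ : Perm ι, ∏ a, W a (τ a) ≤ ∏ a, W a (σ a))
    {x : ι} {t : List ι} (ht : (x :: t).Nodup) :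
    1 ≤ pathProd (exchangeRatio W σ) (x :: t ++ [x]) := by
  have hle := prod_comp_perm_le_prod_of_maximal hσ hmax (s := (x :: t).toFinset)
    (π := (x :: t).formPerm) fun a ha => formPerm_apply_of_notMem (by simpa using ha)
  simp only [pathProd_cycle_eq_prod_formPerm _ ht, exchangeRatio]
  have hpos : 0 < ∏ a ∈ (x :: t).toFinset, W a (σ a) := Finset.prod_pos fun a _ => hσ a
  rw [ENNReal.prod_div_distrib_of_ne_top fun _ _ => ENNReal.ofReal_ne_top,
    ← ENNReal.ofReal_prod_of_nonneg fun _ _ => hW _ _,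
    ← ENNReal.ofReal_prod_of_nonneg fun _ _ => hW _ _,
    ENNReal.le_div_iff_mul_le (Or.inr (ENNReal.ofReal_pos.2 hpos).ne')
      (Or.inr ENNReal.ofReal_ne_top), one_mul]
  exact ENNReal.ofReal_le_ofReal hle

lemma toReal_mul_le_of_le_mul_exchangeRatio (hW : ∀ a r, 0 ≤ W a r) {D : ι → ℝ≥0∞}
    (hD : ∀ b, D b ≠ ∞) {a b : ι} (h : D b ≤ D a * exchangeRatio W σ a b) :
    (D b).toReal * W a (σ b) ≤ (D a).toReal * W a (σ a) := by
  have key : D b * ENNReal.ofReal (W a (σ b)) ≤ D a * ENNReal.ofReal (W a (σ a)) :=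
    calc D b * ENNReal.ofReal (W a (σ b))
        ≤ D a * exchangeRatio W σ a b * ENNReal.ofReal (W a (σ b)) := mul_le_mul_left h _
      _ = D a * (ENNReal.ofReal (W a (σ b)) * exchangeRatio W σ a b) := by ring
      _ ≤ D a * ENNReal.ofReal (W a (σ a)) := mul_le_mul_right ENNReal.mul_div_le _
  simpa [ENNReal.toReal_ofReal, hW] using
    ENNReal.toReal_mono (ENNReal.mul_ne_top (hD a) ENNReal.ofReal_ne_top) key

end Assignment

/-- Lemma C.1 (multiplicative quasilinear lemma). -/
theorem multiplicative_quasilinear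
    (n : ℕ) (W : Fin n → Fin n → ℝ)
    (hW : ∀ a r, 0 ≤ W a r)
    (hpos : ∃ π : Equiv.Perm (Fin n), ∀ a, 0 < W a (π a)) :
    ∃ (σ : Equiv.Perm (Fin n)) (d : Fin n → ℝ),
      (∀ r, 0 < d r) ∧
      ∀ a r, d r * W a r ≤ d (σ a) * W a (σ a) := by
  obtain ⟨π, hπ⟩ := hpos
  obtain ⟨σ, hmax⟩ := Finite.exists_max fun τ : Perm (Fin n) => ∏ a, W a (τ a)
  have hσ (a : Fin n) : 0 < W a (σ a) := by
    have hprod := (Finset.prod_pos fun a _ => hπ a).trans_le (hmax π)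
    exact (hW a _).lt_of_ne fun h0 => hprod.ne' (Finset.prod_eq_zero (Finset.mem_univ a) h0.symm)
  obtain ⟨D, hD0, hDtop, hD⟩ := exists_potential_of_one_le_pathProd_cycle
    (exchangeRatio_ne_zero hσ) fun x t ht => one_le_pathProd_exchangeRatio_cycle hW hσ hmax ht
  refine ⟨σ, fun r => (D (σ.symm r)).toReal, fun r => ENNReal.toReal_pos (hD0 _) (hDtop _),
    fun a r => ?_⟩
  obtain ⟨b, rfl⟩ := σ.surjective r
  simpa using toReal_mul_le_of_le_mul_exchangeRatio hW hDtop (hD a b)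
end

section
/- Lemma 7.9 (piecewise-linear to linear reduction): Let v : Fin n → Fin n → ℝ → ℝ be utilities, and suppose there exist K ∈ ℝ and slopes λ : Fin n → Fin n → ℝ with λ a r > 0 such that v a r x = v a r K − λ a r · (x − K) for all agents a, rooms r, and all x ≥ K (each utility is affine with slope −λ a r beyond K). Let π be a permutation of Fin n and p' : Fin n → ℝ a price vector with p' r ≥ 0 for all r such that v a (π a) K − λ a (π a) · p' (π a) ≥ v a r K − λ a r · p' r for all a and r. Then the pair (π, p) with p r := p' r + K is an envy-free solution of the instance v. -/
lemma apply_add_eq_sub_mul_of_affine_ge {f : ℝ → ℝ} {K l p : ℝ}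
    (hf : ∀ x, K ≤ x → f x = f K - l * (x - K)) (hp : 0 ≤ p) :
    f (p + K) = f K - l * p := by
  rw [hf _ (le_add_of_nonneg_left hp), add_sub_cancel_right]

theorem piecewise_linear_to_linear_general
    (n : ℕ) (v : Fin n → Fin n → ℝ → ℝ)
    (K : ℝ) (lam : Fin n → Fin n → ℝ)
    (hlin : ∀ a r x, K ≤ x → v a r x = v a r K - lam a r * (x - K))
    (π : Equiv.Perm (Fin n)) (p' : Fin n → ℝ)
    (hp' : ∀ r, 0 ≤ p' r)
    (hEF' : ∀ a r, v a r K - lam a r * p' r ≤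
      v a (π a) K - lam a (π a) * p' (π a)) :
    ∀ a r, v a r (p' r + K) ≤ v a (π a) (p' (π a) + K) := by
  intro a r
  rw [apply_add_eq_sub_mul_of_affine_ge (hlin a r) (hp' r),
    apply_add_eq_sub_mul_of_affine_ge (hlin a (π a)) (hp' (π a))]
  exact hEF' a r

/-- Lemma 7.9 (piecewise-linear to linear reduction): an envy-free solution
of the linearized instance beyond the last breakpoint `K` shifts to an
envy-free solution of the original instance. -/
theorem piecewise_linear_to_linear
    (n : ℕ) (v : Fin n → Fin n → ℝ → ℝ)
    (K : ℝ) (lam : Fin n → Fin n → ℝ)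
    (hlam : ∀ a r, 0 < lam a r)
    (hlin : ∀ a r x, K ≤ x → v a r x = v a r K - lam a r * (x - K))
    (π : Equiv.Perm (Fin n)) (p' : Fin n → ℝ)
    (hp' : ∀ r, 0 ≤ p' r)
    (hEF' : ∀ a r, v a r K - lam a r * p' r ≤
      v a (π a) K - lam a (π a) * p' (π a)) :
    ∀ a r, v a r (p' r + K) ≤ v a (π a) (p' (π a) + K) :=
  piecewise_linear_to_linear_general n v K lam hlin π p' hp' hEF'
end

section
/- Nonexistence of envy-free solutions under unbounded utilities (Appendix D): Consider the two-agent, two-room instance in which both agents have the same utilities, given by u 0 x := Real.exp (−x) + 2 for room 0 and u 1 x := −Real.exp x + 2 for room 1 (so v a r x = u r x for a ∈ Fin 2). Then for every permutation π of Fin 2 and every price vector p : Fin 2 → ℝ, the solution (π, p) is not envy-free; that is, this instance admits no envy-free solution, even though its utilities are continuous and strictly decreasing (they are unbounded). -/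
/-- Identical utilities of the two agents for the two rooms: room `0` has
utility `exp (-x) + 2`, room `1` has utility `-exp x + 2`. -/
noncomputable def u : Fin 2 → ℝ → ℝ :=
  fun r x => if r = 0 then Real.exp (-x) + 2 else -Real.exp x + 2

lemma u_one_lt_two (x : ℝ) : u 1 x < 2 := by
  simpa [u] using Real.exp_pos x

lemma two_lt_u_zero (x : ℝ) : 2 < u 0 x := by
  simpa [u] using Real.exp_pos (-x)

lemma u_one_lt_u_zero (x y : ℝ) : u 1 x < u 0 y :=
  (u_one_lt_two x).trans (two_lt_u_zero y)

/-- Nonexistence of envy-free solutions under unbounded utilities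
(Appendix D): the two-agent instance `v a r x = u r x` admits no envy-free
solution. -/
theorem no_envy_free_unbounded :
    ∀ (π : Equiv.Perm (Fin 2)) (p : Fin 2 → ℝ),
      ¬ (∀ a r : Fin 2, u r (p r) ≤ u (π a) (p (π a))) := by
  intro π p hEF
  have hEnvy := hEF (π.symm 1) 0
  rw [Equiv.apply_symm_apply] at hEnvy
  exact (u_one_lt_u_zero (p 1) (p 0)).not_ge hEnvy
end
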